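/- arXiv:1906.05598 — 4 statements merged into one kernel-verified Lean document; each statement's English description precedes it below -/
import Mathlib

section
/- Let P be a set of 2n points in regular wheel configuration in the plane (2n−1 points regularly spaced on a circle plus the center), with n ≥ 2. If uv is a non-radial edge (i.e., neither endpoint is the center), then the line segment uv separates P − {u, v} into two parts A and A(x), where A(x) contains the center x, and moreover |A| ≤ n − 2 and |A(x)| ≥ n. -/
open scoped Real

namespace WheelCfg

/-- Vertex type of the wheel on `2n` points: `none` is the center,
`some i` is the `i`-th of the `2n-1` regularly spaced circle points. -/
abbrev WV (n : ℕ) := Option (Fin (2*n-1))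

/-- Positions of the points of a regular wheel configuration with center `c`,
radius `R` and initial angle `θ`. -/
noncomputable def wpos (n : ℕ) (c : ℝ × ℝ) (R θ : ℝ) : WV n → ℝ × ℝ
  | none => c
  | some i => (c.1 + R * Real.cos (θ + 2*π*i.val/(2*n-1)),
               c.2 + R * Real.sin (θ + 2*π*i.val/(2*n-1)))

/-- A radial edge: one endpoint is the center. -/
def Radial {n : ℕ} : WV n → WV n → Prop
  | none, _ => True
  | _, none => True
  | some _, some _ => False

/-- A boundary edge: joins two cyclically consecutive circle points. -/
def Boundary {n : ℕ} : WV n → WV n → Prop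
  | some i, some j => (i.val + 1) % (2*n-1) = j.val ∨ (j.val + 1) % (2*n-1) = i.val
  | _, _ => False

/-- Non-crossing: distinct edges have disjoint open segments. -/
def NonCrossing {n : ℕ} (pos : WV n → ℝ × ℝ) (T : SimpleGraph (WV n)) : Prop :=
  ∀ a b c d : WV n, T.Adj a b → T.Adj c d → s(a,b) ≠ s(c,d) →
    Disjoint (openSegment ℝ (pos a) (pos b)) (openSegment ℝ (pos c) (pos d))

/-- A plane spanning tree of the wheel configuration. -/
def PlaneSpanningTree {n : ℕ} (pos : WV n → ℝ × ℝ) (T : SimpleGraph (WV n)) : Prop :=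
  T.IsTree ∧ NonCrossing pos T

/-- A partition of the edge set of the complete geometric graph into `n` graphs. -/
def IsPartition {n : ℕ} (T : Fin n → SimpleGraph (WV n)) : Prop :=
  ∀ a b : WV n, a ≠ b → ∃! i : Fin n, (T i).Adj a b

/-- The cyclic successor of a circle point. -/
def nxt {m : ℕ} (k : Fin m) : Fin m := ⟨(k.val + 1) % m, Nat.mod_lt _ k.pos⟩

/-- The number of boundary edges of `T`. -/
noncomputable def boundaryCount {n : ℕ} (T : SimpleGraph (WV n)) : ℕ :=
  Set.ncard {k : Fin (2*n-1) | T.Adj (some k) (some (nxt k))}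

/-- The number of radial edges of `T`. -/
noncomputable def radialCount {n : ℕ} (T : SimpleGraph (WV n)) : ℕ :=
  Set.ncard {k : Fin (2*n-1) | T.Adj none (some k)}

/-- The circle point with index `k` (mod `2n-1`). -/
def cir (n : ℕ) (h : 0 < 2*n-1) (k : ℕ) : WV n := some ⟨k % (2*n-1), Nat.mod_lt _ h⟩

/-- Signed side of point `p` with respect to the oriented line through `u`, `v`. -/
def sideVal (u v p : ℝ × ℝ) : ℝ :=
  (v.1 - u.1) * (p.2 - u.2) - (v.2 - u.2) * (p.1 - u.1)

end WheelCfg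

/-! Parametrize the circle points by half-angles, `θ + 2a`. Then the signed side of the point
at `θ + 2t` with respect to the chord from `θ + 2a` to `θ + 2b` is
`4R² sin(b-a) sin(t-a) sin(t-b)`, and that of the centre is `2R² sin(b-a) cos(b-a)`.
For indices `i < j` the point `k` is therefore on the far side of the chord exactly when it
lies on the shorter of the two arcs cut off by `i` and `j` (`i < k < j` when `cos > 0`,
outside `[i, j]` when `cos < 0`). Since `2n - 1` is odd, the shorter arc has at most `n - 2`
interior points and the longer one at least `n - 1`. -/

namespace WheelCfg

open Real

noncomputable def onCircle (c : ℝ × ℝ) (R α : ℝ) : ℝ × ℝ :=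
  (c.1 + R * cos α, c.2 + R * sin α)

lemma sideVal_swap (u v p : ℝ × ℝ) : sideVal v u p = -sideVal u v p := by
  simp only [sideVal]; ring

lemma sideVal_onCircle_center (c : ℝ × ℝ) (R a b : ℝ) :
    sideVal (onCircle c R (2 * a)) (onCircle c R (2 * b)) c =
      2 * R ^ 2 * sin (b - a) * cos (b - a) := by
  have h := sin_sub (2 * b) (2 * a)
  rw [← mul_sub, sin_two_mul] at h
  simp only [sideVal, onCircle]
  linear_combination (-R ^ 2) * h

lemma sideVal_onCircle (c : ℝ × ℝ) (R a b t : ℝ) :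
    sideVal (onCircle c R (2 * a)) (onCircle c R (2 * b)) (onCircle c R (2 * t)) =
      4 * R ^ 2 * sin (b - a) * sin (t - a) * sin (t - b) := by
  have e1 : cos (2 * b) - cos (2 * a) = -2 * sin (b + a) * sin (b - a) := by
    rw [cos_sub_cos]; ring_nf
  have e2 : sin (2 * t) - sin (2 * a) = 2 * sin (t - a) * cos (t + a) := by
    rw [sin_sub_sin]; ring_nf
  have e3 : sin (2 * b) - sin (2 * a) = 2 * sin (b - a) * cos (b + a) := by
    rw [sin_sub_sin]; ring_nf
  have e4 : cos (2 * t) - cos (2 * a) = -2 * sin (t + a) * sin (t - a) := by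
    rw [cos_sub_cos]; ring_nf
  have e5 : sin (t - b) = sin (t + a) * cos (b + a) - cos (t + a) * sin (b + a) := by
    rw [← sin_sub]; ring_nf
  have h : sideVal (onCircle c R (2 * a)) (onCircle c R (2 * b)) (onCircle c R (2 * t)) =
      R ^ 2 * ((cos (2 * b) - cos (2 * a)) * (sin (2 * t) - sin (2 * a)) -
        (sin (2 * b) - sin (2 * a)) * (cos (2 * t) - cos (2 * a))) := by
    simp only [sideVal, onCircle]; ring
  rw [h, e1, e2, e3, e4]
  linear_combination (-4 * R ^ 2 * sin (b - a) * sin (t - a)) * e5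

lemma wpos_some (n : ℕ) (c : ℝ × ℝ) (R θ : ℝ) (k : Fin (2 * n - 1)) :
    wpos n c R θ (some k) = onCircle c R (2 * (θ / 2 + π * k / (2 * n - 1 : ℕ))) := by
  have hn : 1 ≤ 2 * n := by have := k.pos; omega
  simp only [wpos, onCircle]
  push_cast [Nat.cast_sub hn]
  ring_nf

lemma setOf_ne_and_ne_and_eq {α : Type*} {i j : α} {p : α → Prop} {S : Set α}
    (hS : ∀ k ∈ S, k ≠ i ∧ k ≠ j) 
    (hp : ∀ k, k ≠ i → k ≠ j → (p k ↔ k ∈ S)) :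
    {k | k ≠ i ∧ k ≠ j ∧ p k} = S := by
  ext k
  exact ⟨fun ⟨hki, hkj, hk⟩ => (hp k hki hkj).1 hk,
    fun hk => ⟨(hS k hk).1, (hS k hk).2, (hp k (hS k hk).1 (hS k hk).2).2 hk⟩⟩

section CircleIndex

variable {M : ℕ}

lemma lt_or_mem_Ioo_or_lt {i j k : Fin M} (hij : i < j) (hki : k ≠ i) (hkj : k ≠ j) :
    k < i ∨ k ∈ Set.Ioo i j ∨ j < k := by
  rw [Set.mem_Ioo]; omega

lemma sin_sub_pos_of_lt {u v : Fin M} (h : u < v) : 0 < sin (π * v / M - π * u / M) := by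
  have hM : (0 : ℝ) < M := by exact_mod_cast u.pos
  have huv : (u : ℝ) < v := by exact_mod_cast h
  have hvM : (v : ℝ) < M := by exact_mod_cast v.isLt
  have hu : (0 : ℝ) ≤ u := u.val.cast_nonneg
  rw [← sub_div, ← mul_sub]
  apply sin_pos_of_pos_of_lt_pi
  · have := pi_pos; positivity
  · rw [div_lt_iff₀ hM]; nlinarith [pi_pos]

lemma sin_sub_neg_of_lt {u v : Fin M} (h : v < u) : sin (π * v / M - π * u / M) < 0 := by
  rw [← neg_sub, sin_neg, neg_neg_iff_pos]
  exact sin_sub_pos_of_lt h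

lemma sin_sub_ne_zero {u v : Fin M} (h : u ≠ v) : sin (π * v / M - π * u / M) ≠ 0 := by
  rcases h.lt_or_gt with h | h
  · exact (sin_sub_pos_of_lt h).ne'
  · exact (sin_sub_neg_of_lt h).ne

lemma cos_sub_pos_of_two_mul_lt {u v : Fin M} (huv : u ≤ v) (h : 2 * (v - u : ℕ) < M) :
    0 < cos (π * v / M - π * u / M) := by
  have hM : (0 : ℝ) < M := by exact_mod_cast u.pos
  have huv' : (u : ℝ) ≤ v := by exact_mod_cast huv
  have h' : 2 * (v : ℝ) < M + 2 * u := by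
    exact_mod_cast (by omega : 2 * (v : ℕ) < M + 2 * u)
  rw [← sub_div, ← mul_sub]
  apply cos_pos_of_mem_Ioo
  constructor
  · have := pi_pos
    have : 0 ≤ π * ((v : ℝ) - u) / M := by apply div_nonneg <;> nlinarith
    linarith
  · rw [div_lt_iff₀ hM]; nlinarith [pi_pos]

lemma cos_sub_neg_of_lt_two_mul {u v : Fin M} (h : M < 2 * (v - u : ℕ)) :
    cos (π * v / M - π * u / M) < 0 := by
  have hM : (0 : ℝ) < M := by exact_mod_cast u.pos
  have hvM : (v : ℝ) < M := by exact_mod_cast v.isLt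
  have hu : (0 : ℝ) ≤ u := u.val.cast_nonneg
  have h' : (M : ℝ) + 2 * u < 2 * v := by
    exact_mod_cast (by omega : M + 2 * (u : ℕ) < 2 * v)
  rw [← sub_div, ← mul_sub]
  apply cos_neg_of_pi_div_two_lt_of_lt
  · rw [lt_div_iff₀ hM]; nlinarith [pi_pos]
  · rw [div_lt_iff₀ hM]; nlinarith [pi_pos]

lemma sin_mul_sin_neg_iff {i j k : Fin M} (hij : i < j) (hki : k ≠ i) (hkj : k ≠ j) :
    sin (π * k / M - π * i / M) * sin (π * k / M - π * j / M) < 0 ↔ k ∈ Set.Ioo i j := by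
  rcases lt_or_mem_Ioo_or_lt hij hki hkj with hk | hk | hk
  · simp only [Set.mem_Ioo, hk.not_gt, false_and, iff_false, not_lt]
    exact (mul_pos_of_neg_of_neg (sin_sub_neg_of_lt hk) (sin_sub_neg_of_lt (hk.trans hij))).le
  · simp only [hk, iff_true]
    exact mul_neg_of_pos_of_neg (sin_sub_pos_of_lt hk.1) (sin_sub_neg_of_lt hk.2)
  · simp only [Set.mem_Ioo, hk.not_gt, and_false, iff_false, not_lt]
    exact (mul_pos (sin_sub_pos_of_lt (hij.trans hk)) (sin_sub_pos_of_lt hk)).le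

lemma sin_mul_sin_pos_iff {i j k : Fin M} (hij : i < j) (hki : k ≠ i) (hkj : k ≠ j) :
    0 < sin (π * k / M - π * i / M) * sin (π * k / M - π * j / M) ↔ k ∉ Set.Icc i j := by
  rcases lt_or_mem_Ioo_or_lt hij hki hkj with hk | hk | hk
  · simp only [Set.mem_Icc, hk.not_ge, false_and, not_false_eq_true, iff_true]
    exact mul_pos_of_neg_of_neg (sin_sub_neg_of_lt hk) (sin_sub_neg_of_lt (hk.trans hij))
  · simp only [Set.mem_Icc, hk.1.le, hk.2.le, and_self, not_true_eq_false, iff_false, not_lt]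
    exact (mul_neg_of_pos_of_neg (sin_sub_pos_of_lt hk.1) (sin_sub_neg_of_lt hk.2)).le
  · simp only [Set.mem_Icc, hk.not_ge, and_false, not_false_eq_true, iff_true]
    exact mul_pos (sin_sub_pos_of_lt (hij.trans hk)) (sin_sub_pos_of_lt hk)

lemma setOf_mul_sin_mul_sin_of_pos {i j : Fin M} (hij : i < j) {C : ℝ} (hC : 0 < C) :
    {k | k ≠ i ∧ k ≠ j ∧
      C * (sin (π * k / M - π * i / M) * sin (π * k / M - π * j / M)) < 0} =
      Set.Ioo i j ∧
    {k | k ≠ i ∧ k ≠ j ∧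
      0 < C * (sin (π * k / M - π * i / M) * sin (π * k / M - π * j / M))} =
      (Set.Icc i j)ᶜ := by
  have hIoo (k : Fin M) (hk : k ∈ Set.Ioo i j) : k ≠ i ∧ k ≠ j := ⟨hk.1.ne', hk.2.ne⟩
  have hIcc (k : Fin M) (hk : k ∈ (Set.Icc i j)ᶜ) : k ≠ i ∧ k ≠ j :=
    ⟨fun h => hk ⟨h.ge, h ▸ hij.le⟩, fun h => hk ⟨h ▸ hij.le, h.le⟩⟩
  refine ⟨setOf_ne_and_ne_and_eq hIoo fun k hki hkj => ?_,
    setOf_ne_and_ne_and_eq hIcc fun k hki hkj => ?_⟩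
  · simpa [mul_neg_iff, hC, hC.not_gt] using sin_mul_sin_neg_iff hij hki hkj
  · simpa [mul_pos_iff, hC, hC.not_gt] using sin_mul_sin_pos_iff hij hki hkj

lemma setOf_mul_sin_mul_sin_of_neg {i j : Fin M} (hij : i < j) {C : ℝ} (hC : C < 0) :
    {k | k ≠ i ∧ k ≠ j ∧
      C * (sin (π * k / M - π * i / M) * sin (π * k / M - π * j / M)) < 0} =
      (Set.Icc i j)ᶜ ∧
    {k | k ≠ i ∧ k ≠ j ∧
      0 < C * (sin (π * k / M - π * i / M) * sin (π * k / M - π * j / M))} =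
      Set.Ioo i j := by
  obtain ⟨hneg, hpos⟩ := setOf_mul_sin_mul_sin_of_pos hij (neg_pos.2 hC)
  simp only [neg_mul, neg_pos, neg_lt_zero] at hneg hpos
  exact ⟨hpos, hneg⟩

lemma ncard_Ioo (i j : Fin M) : (Set.Ioo i j).ncard = j - i - 1 := by
  rw [← Finset.coe_Ioo, Set.ncard_coe_finset, Fin.card_Ioo]

lemma ncard_compl_Icc (i j : Fin M) : (Set.Icc i j)ᶜ.ncard = M - (j + 1 - i) := by
  rw [Set.ncard_compl, ← Finset.coe_Icc, Set.ncard_coe_finset, Fin.card_Icc,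
    Nat.card_eq_fintype_card, Fintype.card_fin]

end CircleIndex

end WheelCfg

open WheelCfg in
theorem stmt0_general (n : ℕ) (c : ℝ × ℝ) (R θ : ℝ) (hR : 0 < R)
    (i j : Fin (2*n-1)) (hij : i ≠ j) :
    sideVal (wpos n c R θ (some i)) (wpos n c R θ (some j)) c ≠ 0 ∧
    (∀ k : Fin (2*n-1), k ≠ i → k ≠ j →
      sideVal (wpos n c R θ (some i)) (wpos n c R θ (some j)) (wpos n c R θ (some k)) ≠ 0) ∧
    Set.ncard {k : Fin (2*n-1) | k ≠ i ∧ k ≠ j ∧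
        sideVal (wpos n c R θ (some i)) (wpos n c R θ (some j)) (wpos n c R θ (some k)) *
          sideVal (wpos n c R θ (some i)) (wpos n c R θ (some j)) c < 0} ≤ n - 2 ∧
    n ≤ 1 + Set.ncard {k : Fin (2*n-1) | k ≠ i ∧ k ≠ j ∧
        0 < sideVal (wpos n c R θ (some i)) (wpos n c R θ (some j)) (wpos n c R θ (some k)) *
          sideVal (wpos n c R θ (some i)) (wpos n c R θ (some j)) c} := by
  wlog hlt : i < j generalizing i j
  · have := this j i hij.symm (hij.symm.lt_of_le (not_lt.1 hlt))
    simp only [sideVal_swap (wpos n c R θ (some i)), neg_mul_neg, neg_ne_zero] at this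
    obtain ⟨hc, hk, hfar, hnear⟩ := this
    refine ⟨hc, fun k hki hkj => hk k hkj hki, ?_, ?_⟩
    · convert hfar using 3; ext k; exact and_left_comm
    · convert hnear using 4; ext k; exact and_left_comm
  simp only [wpos_some, sideVal_onCircle_center, sideVal_onCircle, add_sub_add_left_eq_sub]
  set s := Real.sin (π * j / (2 * n - 1 : ℕ) - π * i / (2 * n - 1 : ℕ))
  set co := Real.cos (π * j / (2 * n - 1 : ℕ) - π * i / (2 * n - 1 : ℕ))
  have hs : 0 < s := sin_sub_pos_of_lt hlt
  have hd : 2 * (j - i : ℕ) < 2 * n - 1 ∨ 2 * n - 1 < 2 * (j - i : ℕ) := by omega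
  have hco : co ≠ 0 := hd.elim (fun hd => (cos_sub_pos_of_two_mul_lt hlt.le hd).ne')
    fun hd => (cos_sub_neg_of_lt_two_mul hd).ne
  simp only [show ∀ a b : ℝ, 4 * R ^ 2 * s * a * b * (2 * R ^ 2 * s * co) =
    8 * R ^ 4 * s ^ 2 * co * (a * b) from fun a b => by ring]
  refine ⟨mul_ne_zero (by positivity) hco, fun k hki hkj =>
    mul_ne_zero (mul_ne_zero (by positivity) (sin_sub_ne_zero hki.symm))
      (sin_sub_ne_zero hkj.symm), ?_⟩
  rcases hd with hd | hd
  · have hC : 0 < 8 * R ^ 4 * s ^ 2 * co :=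
      mul_pos (by positivity) (cos_sub_pos_of_two_mul_lt hlt.le hd)
    obtain ⟨hfar, hnear⟩ := setOf_mul_sin_mul_sin_of_pos hlt hC
    rw [hfar, hnear, ncard_Ioo, ncard_compl_Icc]
    omega
  · have hC : 8 * R ^ 4 * s ^ 2 * co < 0 :=
      mul_neg_of_pos_of_neg (by positivity) (cos_sub_neg_of_lt_two_mul hd)
    obtain ⟨hfar, hnear⟩ := setOf_mul_sin_mul_sin_of_neg hlt hC
    rw [hfar, hnear, ncard_Ioo, ncard_compl_Icc]
    omega

open WheelCfg in
/-- A non-radial edge `uv` of a regular wheel configuration of `2n` points separates the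
remaining points into a part `A` (opposite side from the center) and a part `A(x)`
(containing the center `x`), with `|A| ≤ n - 2` and `|A(x)| ≥ n`. -/
theorem stmt0 (n : ℕ) (hn : 2 ≤ n) (c : ℝ × ℝ) (R θ : ℝ) (hR : 0 < R)
    (i j : Fin (2*n-1)) (hij : i ≠ j) :
    sideVal (wpos n c R θ (some i)) (wpos n c R θ (some j)) c ≠ 0 ∧
    (∀ k : Fin (2*n-1), k ≠ i → k ≠ j →
      sideVal (wpos n c R θ (some i)) (wpos n c R θ (some j)) (wpos n c R θ (some k)) ≠ 0) ∧
    Set.ncard {k : Fin (2*n-1) | k ≠ i ∧ k ≠ j ∧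
        sideVal (wpos n c R θ (some i)) (wpos n c R θ (some j)) (wpos n c R θ (some k)) *
          sideVal (wpos n c R θ (some i)) (wpos n c R θ (some j)) c < 0} ≤ n - 2 ∧
    n ≤ 1 + Set.ncard {k : Fin (2*n-1) | k ≠ i ∧ k ≠ j ∧
        0 < sideVal (wpos n c R θ (some i)) (wpos n c R θ (some j)) (wpos n c R θ (some k)) *
          sideVal (wpos n c R θ (some i)) (wpos n c R θ (some j)) c} :=
  stmt0_general n c R θ hR i j hij
end

section
/- Let P be a set of 2n points in regular wheel configuration in the plane, n ≥ 2. If T is a plane (non-crossing) spanning tree on P that has no boundary edge (no edge joining two consecutive points on the circle), then every edge of T is a radial edge (incident with the center). -/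
open scoped Real

namespace WheelAux
open Real WheelCfg

noncomputable def pt (c : ℝ × ℝ) (R ψ : ℝ) (x : ℝ) : ℝ × ℝ :=
  (c.1 + R * Real.cos (ψ + x), c.2 + R * Real.sin (ψ + x))

lemma sideVal_swap23 (u v p : ℝ × ℝ) : sideVal u v p = - sideVal u p v := by
  simp only [sideVal]; ring

lemma foursin (x y : ℝ) :
    sin x + sin y - sin (x + y) = 4 * sin (x/2) * sin (y/2) * sin ((x+y)/2) := by
  have e1 : sin x = 2 * sin (x/2) * cos (x/2) := by
    rw [← Real.sin_two_mul]; congr 1; ring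
  have e2 : sin y = 2 * sin (y/2) * cos (y/2) := by
    rw [← Real.sin_two_mul]; congr 1; ring
  have e3 : sin (x+y) = 2 * (sin (x/2) * cos (y/2) + cos (x/2) * sin (y/2)) *
      (cos (x/2) * cos (y/2) - sin (x/2) * sin (y/2)) := by
    rw [show x+y = 2*((x/2)+(y/2)) by ring, Real.sin_two_mul, Real.sin_add, Real.cos_add]
  have e4 : sin ((x+y)/2) = sin (x/2) * cos (y/2) + cos (x/2) * sin (y/2) := by
    rw [show (x+y)/2 = x/2 + y/2 by ring, Real.sin_add]
  have p1 := Real.sin_sq_add_cos_sq (x/2)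
  have p2 := Real.sin_sq_add_cos_sq (y/2)
  rw [e1, e2, e3, e4]
  linear_combination (-2*sin (x/2)*cos (x/2))*p2 + (-2*sin (y/2)*cos (y/2))*p1

lemma sideVal_pt_sum (c : ℝ × ℝ) (R ψ a b g : ℝ) :
    sideVal (pt c R ψ a) (pt c R ψ b) (pt c R ψ g)
      = R^2 * (sin (b-a) + sin (g-b) - sin ((b-a)+(g-b))) := by
  simp only [sideVal, pt, Real.cos_add, Real.sin_add, Real.sin_sub, Real.cos_sub]
  have h := Real.sin_sq_add_cos_sq ψ
  linear_combination (R^2 * ((cos b - cos a) * (sin g - sin a)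
    - (sin b - sin a) * (cos g - cos a))) * h
    + (R^2 * (cos a * sin g - sin a * cos g)) * (Real.sin_sq_add_cos_sq b)

lemma sideVal_pt (c : ℝ × ℝ) (R ψ a b g : ℝ) :
    sideVal (pt c R ψ a) (pt c R ψ b) (pt c R ψ g)
      = R^2 * (4 * sin ((b-a)/2) * sin ((g-b)/2) * sin ((g-a)/2)) := by
  rw [sideVal_pt_sum, foursin]
  rw [show (b-a) + (g-b) = g - a by ring]

lemma sideVal_pt_center (c : ℝ × ℝ) (R ψ a b : ℝ) :
    sideVal (pt c R ψ a) (pt c R ψ b) c = R^2 * sin (b - a) := by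
  simp only [sideVal, pt, Real.sin_sub, Real.cos_add, Real.sin_add]
  have h := Real.sin_sq_add_cos_sq ψ
  linear_combination (R^2 * ((cos b - cos a) * (- sin a) - (sin b - sin a) * (- cos a))) * h

lemma frac_pos {s t : ℝ} (h : s * t < 0) : 0 < s / (s - t) ∧ s / (s - t) < 1 := by
  have hst : s - t ≠ 0 := by
    intro h0
    have he : s = t := by linarith
    rw [he] at h
    nlinarith [sq_nonneg t]
  have h1 : 0 < s * (s - t) := by nlinarith [sq_nonneg s]
  have h2 : 0 < (-t) * (s - t) := by nlinarith [sq_nonneg t]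
  constructor
  · have : s / (s - t) = (s * (s - t)) / ((s - t)^2) := by
      field_simp
    rw [this]; positivity
  · have : 1 - s / (s - t) = ((-t) * (s - t)) / ((s - t)^2) := by
      field_simp; ring
    nlinarith [div_pos h2 (by positivity : (0:ℝ) < (s - t)^2)]

lemma segcross (A B P Q : ℝ × ℝ)
    (h1 : sideVal A B P * sideVal A B Q < 0)
    (h2 : sideVal P Q A * sideVal P Q B < 0) :
    ¬ Disjoint (openSegment ℝ A B) (openSegment ℝ P Q) := by
  set sP := sideVal A B P with hsP
  set sQ := sideVal A B Q with hsQ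
  set sA := sideVal P Q A with hsA
  set sB := sideVal P Q B with hsB
  have hdt : sP - sQ ≠ 0 := by
    intro h0; rw [show sQ = sP by linarith] at h1; nlinarith [sq_nonneg sP]
  have hdu : sA - sB ≠ 0 := by
    intro h0; rw [show sB = sA by linarith] at h2; nlinarith [sq_nonneg sA]
  set t := sP / (sP - sQ) with hst2
  set u := sA / (sA - sB) with hsu2
  obtain ⟨ht0, ht1⟩ := frac_pos h1
  obtain ⟨hu0, hu1⟩ := frac_pos h2
  rw [Set.not_disjoint_iff]
  refine ⟨(1 - t) • P + t • Q, ?_, ?_⟩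
  · have key : (1 - u) • A + u • B = (1 - t) • P + t • Q := by
      have e1 : (1 - u) * A.1 + u * B.1 = (1 - t) * P.1 + t * Q.1 := by
        rw [hst2, hsu2, hsP, hsQ, hsA, hsB] at *
        field_simp
        simp only [sideVal] at *
        ring
      have e2 : (1 - u) * A.2 + u * B.2 = (1 - t) * P.2 + t * Q.2 := by
        rw [hst2, hsu2, hsP, hsQ, hsA, hsB] at *
        field_simp
        simp only [sideVal] at *
        ring
      ext <;> simp [Prod.fst_add, Prod.snd_add, e1, e2]
    rw [← key]
    exact ⟨1 - u, u, by linarith, hu0, by ring, rfl⟩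
  · exact ⟨1 - t, t, by linarith, ht0, by ring, rfl⟩

lemma wpos_mod (n : ℕ) (hn : 2 ≤ n) (c : ℝ × ℝ) (R θ : ℝ) (i a : ℕ)
    (h : (i + a) % (2*n-1) < 2*n-1) :
    WheelCfg.wpos n c R θ (some ⟨(i + a) % (2*n-1), h⟩)
      = pt c R (θ + 2*π*i/((2*n-1 : ℕ) : ℝ)) (2*π*a/((2*n-1 : ℕ) : ℝ)) := by
  set m := 2*n-1 with hmdef
  have hm0 : 0 < m := by omega
  have hmc : ((m : ℕ) : ℝ) = 2*(n:ℝ) - 1 := by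
    rw [hmdef]; push_cast [Nat.cast_sub (by omega : 1 ≤ 2*n)]; ring
  have hmne : ((m : ℕ) : ℝ) ≠ 0 := by positivity
  set q := (i + a) / m with hq
  set r := (i + a) % m with hr
  have hdm : m * q + r = i + a := Nat.div_add_mod (i+a) m
  have hrc : (r : ℝ) = (i : ℝ) + a - (m : ℝ) * q := by
    have : ((m * q + r : ℕ) : ℝ) = ((i + a : ℕ) : ℝ) := by rw [hdm]
    push_cast at this
    linarith
  have hang : θ + 2*π*(r:ℝ)/(2*(n:ℝ)-1)
      = (θ + 2*π*i/((m : ℕ) : ℝ) + 2*π*a/((m : ℕ) : ℝ)) - (q : ℤ) * (2*π) := by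
    rw [← hmc, hrc]
    push_cast
    field_simp
    ring
  simp only [WheelCfg.wpos, pt, ← hmdef]
  rw [hang, Real.cos_sub_int_mul_two_pi, Real.sin_sub_int_mul_two_pi]

lemma sinpos (x M : ℝ) (hx : 0 < x) (hxM : x < M) : 0 < Real.sin (π * x / M) := by
  have hM : 0 < M := lt_trans hx hxM
  apply Real.sin_pos_of_pos_of_lt_pi
  · positivity
  · rw [div_lt_iff₀ hM]
    nlinarith [Real.pi_pos]

lemma mod_shift (m i k : ℕ) (hi : i < m) (hk : k < m) :
    (i + (k + (m - i)) % m) % m = k := by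
  have h1 : i + (k + (m - i)) = k + m := by omega
  calc (i + (k + (m-i)) % m) % m
      = (i % m + (k + (m-i)) % m) % m := by rw [Nat.mod_eq_of_lt hi]
    _ = (i + (k + (m-i))) % m := by rw [← Nat.add_mod]
    _ = (k + m) % m := by rw [h1]
    _ = k := by rw [Nat.add_mod_right, Nat.mod_eq_of_lt hk]

lemma mod_add_inj (m i a b : ℕ) (ha : a < m) (hb : b < m)
    (h : (i+a) % m = (i+b) % m) : a = b := by
  have h2 := Nat.ModEq.add_left_cancel' i (h : i + a ≡ i + b [MOD m])
  rw [Nat.ModEq] at h2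
  rwa [Nat.mod_eq_of_lt ha, Nat.mod_eq_of_lt hb] at h2

end WheelAux

open WheelAux in
set_option maxHeartbeats 1000000 in
open WheelCfg in
/-- A plane spanning tree of a regular wheel configuration with no boundary edge has only
radial edges. -/
theorem stmt1 (n : ℕ) (hn : 2 ≤ n) (c : ℝ × ℝ) (R θ : ℝ) (hR : 0 < R)
    (T : SimpleGraph (WV n)) (hT : PlaneSpanningTree (wpos n c R θ) T)
    (hnb : ∀ a b : WV n, T.Adj a b → ¬ Boundary a b) :
    ∀ a b : WV n, T.Adj a b → Radial a b := by
  by_contra hcon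
  push_neg at hcon
  obtain ⟨a0, b0, hab0, hrad0⟩ := hcon
  have hm0 : 0 < 2*n-1 := by omega
  have hm3 : 3 ≤ 2*n-1 := by omega
  -- the counterexample edge is between two circle points
  obtain ⟨i0, j0, rfl, rfl⟩ : ∃ i0 j0, a0 = some i0 ∧ b0 = some j0 := by
    match a0, b0 with
    | none, x => exact absurd (by simp [Radial]) hrad0
    | some y, none => exact absurd (by simp [Radial]) hrad0
    | some i0, some j0 => exact ⟨i0, j0, rfl, rfl⟩
  -- the set of realized chord gaps
  have hSne : {g : ℕ | ∃ i j : Fin (2*n-1),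
      T.Adj (some i) (some j) ∧ (i.val + g) % (2*n-1) = j.val ∧ g ≤ n-1}.Nonempty := by
    have hg0 : (i0.val + (j0.val + ((2*n-1) - i0.val)) % (2*n-1)) % (2*n-1) = j0.val :=
      mod_shift _ _ _ i0.isLt j0.isLt
    set g0 := (j0.val + ((2*n-1) - i0.val)) % (2*n-1) with hg0def
    have hg0m : g0 < 2*n-1 := Nat.mod_lt _ hm0
    by_cases hle : g0 ≤ n-1
    · exact ⟨g0, i0, j0, hab0, hg0, hle⟩
    · refine ⟨(2*n-1) - g0, j0, i0, hab0.symm, ?_, by omega⟩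
      calc (j0.val + ((2*n-1) - g0)) % (2*n-1)
          = ((i0.val + g0) % (2*n-1) + ((2*n-1) - g0)) % (2*n-1) := by rw [hg0]
        _ = ((i0.val + g0) + ((2*n-1) - g0)) % (2*n-1) := by
              rw [Nat.mod_add_mod]
        _ = (i0.val + (2*n-1)) % (2*n-1) := by congr 1; omega
        _ = i0.val % (2*n-1) := by rw [Nat.add_mod_right]
        _ = i0.val := Nat.mod_eq_of_lt i0.isLt
  obtain ⟨d, ⟨i, j, hadjij, hij, hdn⟩, hdmin⟩ :
      ∃ d, (∃ i j : Fin (2*n-1),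
        T.Adj (some i) (some j) ∧ (i.val + d) % (2*n-1) = j.val ∧ d ≤ n-1) ∧
        ∀ g ∈ {g : ℕ | ∃ i j : Fin (2*n-1),
          T.Adj (some i) (some j) ∧ (i.val + g) % (2*n-1) = j.val ∧ g ≤ n-1}, d ≤ g :=
    ⟨_, Nat.sInf_mem hSne, fun _ hg => Nat.sInf_le hg⟩
  have hd0 : d ≠ 0 := by
    intro h0
    rw [h0, Nat.add_zero, Nat.mod_eq_of_lt i.isLt] at hij
    exact T.loopless.irrefl _ (by rwa [show j = i from Fin.ext hij.symm] at hadjij)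
  have hd1 : d ≠ 1 := by
    intro h1
    rw [h1] at hij
    exact hnb _ _ hadjij (Or.inl hij)
  have hd2 : 2 ≤ d := by omega
  have hdm : d < 2*n-1 := by omega
  -- the inner point p = i + 1
  obtain ⟨p, hpval⟩ : ∃ p : Fin (2*n-1), p.val = (i.val + 1) % (2*n-1) :=
    ⟨⟨_, Nat.mod_lt _ hm0⟩, rfl⟩
  obtain ⟨q, hpq⟩ : ∃ q, T.Adj (some p) q := by
    obtain ⟨w⟩ : T.Reachable (some p) none := hT.1.isConnected.preconnected _ _
    cases w with
    | cons h _ => exact ⟨_, h⟩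
  -- geometric setup
  set M : ℝ := ((2*n-1 : ℕ) : ℝ) with hMdef
  have hM0 : (0:ℝ) < M := by
    rw [hMdef]; exact_mod_cast hm0
  set ψ : ℝ := θ + 2*π*i.val/M with hψdef
  have hpos : ∀ (a : ℕ) (h : (i.val + a) % (2*n-1) < 2*n-1),
      wpos n c R θ (some ⟨(i.val + a) % (2*n-1), h⟩) = pt c R ψ (2*π*a/M) :=
    fun a h => wpos_mod n hn c R θ i.val a h
  have hposi : wpos n c R θ (some i) = pt c R ψ (2*π*(0:ℕ)/M) := by
    rw [show i = ⟨(i.val + 0) % (2*n-1), by rw [Nat.add_zero, Nat.mod_eq_of_lt i.isLt]; exact i.isLt⟩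
      from Fin.ext (by simp [Nat.mod_eq_of_lt i.isLt])]
    exact hpos 0 _
  have hposj : wpos n c R θ (some j) = pt c R ψ (2*π*(d:ℕ)/M) := by
    rw [show j = ⟨(i.val + d) % (2*n-1), Nat.mod_lt _ hm0⟩ from Fin.ext hij.symm]
    exact hpos d _
  have hposp : wpos n c R θ (some p) = pt c R ψ (2*π*(1:ℕ)/M) := by
    rw [show p = ⟨(i.val + 1) % (2*n-1), Nat.mod_lt _ hm0⟩ from Fin.ext hpval]
    exact hpos 1 _
  have hsin : ∀ x : ℝ, 0 < x → x < M → 0 < Real.sin (π * x / M) := fun x hx hxM => sinpos x M hx hxM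
  have hdR : (2:ℝ) ≤ (d:ℝ) := by exact_mod_cast hd2
  have hdMR : (d:ℝ) < M := by rw [hMdef]; exact_mod_cast hdm
  have hnR : (d:ℝ) ≤ (n:ℝ) - 1 := by
    have h1 : (d:ℝ) ≤ ((n-1 : ℕ):ℝ) := by exact_mod_cast hdn
    have h2 : ((n-1:ℕ):ℝ) = (n:ℝ) - 1 := by
      push_cast [Nat.cast_sub (by omega : 1 ≤ n)]; ring
    linarith
  have hMR : M = 2*(n:ℝ) - 1 := by
    rw [hMdef]; push_cast [Nat.cast_sub (by omega : 1 ≤ 2*n)]; ring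
  -- sign fact used in both cases : sideVal (pos i) (pos j) (pos p) < 0
  have hs1 : sideVal (pt c R ψ (2*π*(0:ℕ)/M)) (pt c R ψ (2*π*(d:ℕ)/M))
      (pt c R ψ (2*π*(1:ℕ)/M)) < 0 := by
    rw [sideVal_pt]
    rw [show (2*π*((d:ℕ):ℝ)/M - 2*π*((0:ℕ):ℝ)/M)/2 = π*(d:ℝ)/M by push_cast; ring]
    rw [show (2*π*((1:ℕ):ℝ)/M - 2*π*((d:ℕ):ℝ)/M)/2 = -(π*((d:ℝ)-1)/M) by push_cast; ring]
    rw [show (2*π*((1:ℕ):ℝ)/M - 2*π*((0:ℕ):ℝ)/M)/2 = π*(1:ℝ)/M by push_cast; ring]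
    rw [Real.sin_neg]
    have ha := hsin _ (by linarith) hdMR
    have hb := hsin ((d:ℝ)-1) (by linarith) (by linarith)
    have hc := hsin 1 one_pos (by linarith [hMR, hnR])
    have hprod : 0 < Real.sin (π*(d:ℝ)/M) * Real.sin (π*((d:ℝ)-1)/M) * Real.sin (π*1/M) * R^2 :=
      mul_pos (mul_pos (mul_pos ha hb) hc) (pow_pos hR 2)
    nlinarith [hprod]
  cases q with
  | none =>
    -- radial edge from p crosses the chord (i,j)
    have hne : s(some i, some j) ≠ s((some p : WV n), (none : WV n)) := by
      intro h
      rcases Sym2.eq_iff.mp h with ⟨h1, h2⟩ | ⟨h1, h2⟩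
      · exact nomatch h2
      · exact nomatch h1
    have hdisj := hT.2 (some i) (some j) (some p) none hadjij hpq hne
    have hcn : wpos n c R θ (none : WV n) = c := rfl
    rw [hposi, hposj, hposp, hcn] at hdisj
    refine segcross _ _ _ _ ?_ ?_ hdisj
    · -- sideVal A B P * sideVal A B c < 0
      have hs2 : 0 < sideVal (pt c R ψ (2*π*(0:ℕ)/M)) (pt c R ψ (2*π*(d:ℕ)/M)) c := by
        rw [sideVal_pt_center]
        rw [show 2*π*((d:ℕ):ℝ)/M - 2*π*((0:ℕ):ℝ)/M = π*(2*(d:ℝ))/M by push_cast; ring]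
        have := hsin (2*(d:ℝ)) (by linarith) (by rw [hMR]; linarith)
        nlinarith [mul_pos (pow_pos hR 2) this]
      nlinarith [hs1, hs2]
    · -- sideVal P c A * sideVal P c B < 0
      have hsA : 0 < sideVal (pt c R ψ (2*π*(1:ℕ)/M)) c (pt c R ψ (2*π*(0:ℕ)/M)) := by
        rw [sideVal_swap23, sideVal_pt_center]
        rw [show 2*π*((0:ℕ):ℝ)/M - 2*π*((1:ℕ):ℝ)/M = -(π*(2*1)/M) by push_cast; ring]
        rw [Real.sin_neg]
        have h2n : (2:ℝ) ≤ (n:ℝ) := by exact_mod_cast hn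
        have := hsin (2*1) (by norm_num) (by rw [hMR]; linarith)
        nlinarith [mul_pos (pow_pos hR 2) this]
      have hsB : sideVal (pt c R ψ (2*π*(1:ℕ)/M)) c (pt c R ψ (2*π*(d:ℕ)/M)) < 0 := by
        rw [sideVal_swap23, sideVal_pt_center]
        rw [show 2*π*((d:ℕ):ℝ)/M - 2*π*((1:ℕ):ℝ)/M = π*(2*((d:ℝ)-1))/M by push_cast; ring]
        have := hsin (2*((d:ℝ)-1)) (by linarith) (by rw [hMR]; linarith)
        nlinarith [mul_pos (pow_pos hR 2) this]
      nlinarith [hsA, hsB]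
  | some k =>
    have hek : (i.val + (k.val + ((2*n-1) - i.val)) % (2*n-1)) % (2*n-1) = k.val :=
      mod_shift _ _ _ i.isLt k.isLt
    set e : ℕ := (k.val + ((2*n-1) - i.val)) % (2*n-1) with hedef
    have hem : e < 2*n-1 := Nat.mod_lt _ hm0
    have hposk : wpos n c R θ (some k) = pt c R ψ (2*π*(e:ℕ)/M) := by
      rw [show k = ⟨(i.val + e) % (2*n-1), Nat.mod_lt _ hm0⟩ from Fin.ext hek.symm]
      exact hpos e _
    have he1 : e ≠ 1 := by
      intro h1
      rw [h1] at hek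
      refine T.loopless.irrefl (some p) ?_
      have hkp : k = p := Fin.ext (by rw [← hek, ← hpval])
      rwa [hkp] at hpq
    rcases lt_or_ge e 3 with he3 | he3
    · -- e = 0 or e = 2 : boundary edge
      interval_cases e
      · -- e = 0 : k = i, edge (p, i) is boundary
        refine hnb _ _ hpq (Or.inr ?_)
        show (k.val + 1) % (2*n-1) = p.val
        rw [← hek, hpval, Nat.mod_add_mod]
      · exact absurd rfl he1
      · -- e = 2 : edge (p, k) is boundary
        refine hnb _ _ hpq (Or.inl ?_)
        show (p.val + 1) % (2*n-1) = k.val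
        rw [hpval]
        calc ((i.val + 1) % (2*n-1) + 1) % (2*n-1)
            = (i.val + 1 + 1) % (2*n-1) := Nat.mod_add_mod _ _ _
          _ = (i.val + 2) % (2*n-1) := by congr 1
          _ = k.val := hek
    · rcases le_or_gt e d with hed | hed
      · -- 3 ≤ e ≤ d : shorter chord, contradicts minimality
        have hmem : d ≤ e - 1 := by
          refine hdmin _ ⟨p, k, hpq, ?_, by omega⟩
          calc (p.val + (e-1)) % (2*n-1)
              = ((i.val + 1) % (2*n-1) + (e-1)) % (2*n-1) := by rw [hpval]
            _ = (i.val + 1 + (e-1)) % (2*n-1) := Nat.mod_add_mod _ _ _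
            _ = (i.val + e) % (2*n-1) := by congr 1; omega
            _ = k.val := hek
        omega
      · -- d < e < 2n-1 : the chords (i,j) and (p,k) cross
        have hpi : p ≠ i := by
          intro h
          have h2 : i.val = (i.val + 1) % (2*n-1) := by rw [← hpval, h]
          have h3 : (i.val + 0) % (2*n-1) = (i.val + 1) % (2*n-1) := by
            rw [Nat.add_zero, Nat.mod_eq_of_lt i.isLt]; exact h2
          have := mod_add_inj _ _ _ _ (by omega) (by omega) h3
          omega
        have hpj : p ≠ j := by
          intro h
          have h2 : (i.val + d) % (2*n-1) = (i.val + 1) % (2*n-1) := by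
            rw [hij, ← hpval, h]
          have := mod_add_inj _ _ _ _ (by omega) (by omega) h2
          omega
        have hne : s(some i, some j) ≠ s((some p : WV n), (some k : WV n)) := by
          intro h
          rcases Sym2.eq_iff.mp h with ⟨h1, h2⟩ | ⟨h1, h2⟩
          · exact hpi (Option.some_injective _ h1).symm
          · exact hpj (Option.some_injective _ h2).symm
        have hdisj := hT.2 (some i) (some j) (some p) (some k) hadjij hpq hne
        rw [hposi, hposj, hposp, hposk] at hdisj
        have heR : (d:ℝ) < (e:ℝ) := by exact_mod_cast hed
        have heM : (e:ℝ) < M := by rw [hMdef]; exact_mod_cast hem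
        have he3R : (3:ℝ) ≤ (e:ℝ) := by exact_mod_cast he3
        refine segcross _ _ _ _ ?_ ?_ hdisj
        · have hs2 : 0 < sideVal (pt c R ψ (2*π*(0:ℕ)/M)) (pt c R ψ (2*π*(d:ℕ)/M))
              (pt c R ψ (2*π*(e:ℕ)/M)) := by
            rw [sideVal_pt]
            rw [show (2*π*((d:ℕ):ℝ)/M - 2*π*((0:ℕ):ℝ)/M)/2 = π*(d:ℝ)/M by push_cast; ring]
            rw [show (2*π*((e:ℕ):ℝ)/M - 2*π*((d:ℕ):ℝ)/M)/2 = π*((e:ℝ)-(d:ℝ))/M by push_cast; ring]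
            rw [show (2*π*((e:ℕ):ℝ)/M - 2*π*((0:ℕ):ℝ)/M)/2 = π*(e:ℝ)/M by push_cast; ring]
            have ha := hsin _ (by linarith) hdMR
            have hb := hsin ((e:ℝ)-(d:ℝ)) (by linarith) (by linarith)
            have hc := hsin (e:ℝ) (by linarith) heM
            nlinarith [mul_pos (mul_pos (mul_pos ha hb) hc) (pow_pos hR 2)]
          nlinarith [hs1, hs2]
        · have hsA : 0 < sideVal (pt c R ψ (2*π*(1:ℕ)/M)) (pt c R ψ (2*π*(e:ℕ)/M))
              (pt c R ψ (2*π*(0:ℕ)/M)) := by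
            rw [sideVal_pt]
            rw [show (2*π*((e:ℕ):ℝ)/M - 2*π*((1:ℕ):ℝ)/M)/2 = π*((e:ℝ)-1)/M by push_cast; ring]
            rw [show (2*π*((0:ℕ):ℝ)/M - 2*π*((e:ℕ):ℝ)/M)/2 = -(π*(e:ℝ)/M) by push_cast; ring]
            rw [show (2*π*((0:ℕ):ℝ)/M - 2*π*((1:ℕ):ℝ)/M)/2 = -(π*(1:ℝ)/M) by push_cast; ring]
            rw [Real.sin_neg, Real.sin_neg]
            have ha := hsin ((e:ℝ)-1) (by linarith) (by linarith)
            have hb := hsin (e:ℝ) (by linarith) heM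
            have hc := hsin 1 one_pos (by rw [hMR]; linarith)
            nlinarith [mul_pos (mul_pos (mul_pos ha hb) hc) (pow_pos hR 2)]
          have hsB : sideVal (pt c R ψ (2*π*(1:ℕ)/M)) (pt c R ψ (2*π*(e:ℕ)/M))
              (pt c R ψ (2*π*(d:ℕ)/M)) < 0 := by
            rw [sideVal_pt]
            rw [show (2*π*((e:ℕ):ℝ)/M - 2*π*((1:ℕ):ℝ)/M)/2 = π*((e:ℝ)-1)/M by push_cast; ring]
            rw [show (2*π*((d:ℕ):ℝ)/M - 2*π*((e:ℕ):ℝ)/M)/2 = -(π*((e:ℝ)-(d:ℝ))/M) by push_cast; ring]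
            rw [show (2*π*((d:ℕ):ℝ)/M - 2*π*((1:ℕ):ℝ)/M)/2 = π*((d:ℝ)-1)/M by push_cast; ring]
            rw [Real.sin_neg]
            have ha := hsin ((e:ℝ)-1) (by linarith) (by linarith)
            have hb := hsin ((e:ℝ)-(d:ℝ)) (by linarith) (by linarith)
            have hc := hsin ((d:ℝ)-1) (by linarith) (by linarith)
            nlinarith [mul_pos (mul_pos (mul_pos ha hb) hc) (pow_pos hR 2)]
          nlinarith [hsA, hsB]
end

section
/- Let P be a set of 2n points in regular wheel configuration, n ≥ 2, and suppose T_1, ..., T_n is a partition of the edge set of the complete geometric graph on P into plane spanning trees. Then every T_i contains at least one boundary edge. -/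
/-!
A plane spanning tree `G` without boundary edges has no edge between two circle points. Otherwise
take such a chord `(k, k + d)` of shortest span `d` (so `2 ≤ d ≤ n - 1`, the center lying on the
far side of it) and look at a neighbour of the circle point `k + 1` inside its arc: the segment to
the center or to a circle point beyond `k + d` crosses the chord, and any other neighbour gives a
boundary edge or a shorter chord. So such a `G` is the star at the center and uses up every radial
edge; but another tree `T j` (there is one as `n ≥ 2`) also contains an edge at the center, which
can only be radial.
-/
open scoped Real

namespace WheelCfg

open Real

noncomputable def circlePt (c : ℝ × ℝ) (R α : ℝ) : ℝ × ℝ :=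
  (c.1 + R * cos α, c.2 + R * sin α)

lemma circlePt_add_two_pi (c : ℝ × ℝ) (R α : ℝ) :
    circlePt c R (α + 2 * π) = circlePt c R α := by
  simp only [circlePt, cos_add_two_pi, sin_add_two_pi]

lemma sideVal_rotate (u v p : ℝ × ℝ) : sideVal u v p = sideVal v p u := by
  simp only [sideVal]; ring

lemma sideVal_swap_right (u v p : ℝ × ℝ) : sideVal u p v = -sideVal u v p := by
  simp only [sideVal]; ring

lemma div_sub_mem_Ioo_of_mul_neg {a b : ℝ} (h : a * b < 0) : a / (a - b) ∈ Set.Ioo 0 1 := by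
  rcases mul_neg_iff.mp h with ⟨ha, hb⟩ | ⟨ha, hb⟩
  · exact ⟨div_pos ha (by linarith), (div_lt_one (by linarith)).mpr (by linarith)⟩
  · exact ⟨div_pos_of_neg_of_neg ha (by linarith),
      (div_lt_one_of_neg (by linarith)).mpr (by linarith)⟩

lemma not_disjoint_openSegment_of_sideVal_mul_neg {u v p q : ℝ × ℝ}
    (hpq : sideVal u v p * sideVal u v q < 0) (huv : sideVal p q u * sideVal p q v < 0) :
    ¬ Disjoint (openSegment ℝ u v) (openSegment ℝ p q) := by
  obtain ⟨ht0, ht1⟩ := div_sub_mem_Ioo_of_mul_neg hpq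
  obtain ⟨hs0, hs1⟩ := div_sub_mem_Ioo_of_mul_neg huv
  have hf : sideVal u v p - sideVal u v q ≠ 0 := fun h0 => by simp [h0] at ht0
  have hg : sideVal p q u - sideVal p q v ≠ 0 := fun h0 => by simp [h0] at hs0
  -- `sideVal u v` is affine, so it vanishes at `(1 - t) • p + t • q`; symmetrically for `s`
  set t := sideVal u v p / (sideVal u v p - sideVal u v q) with ht
  set s := sideVal p q u / (sideVal p q u - sideVal p q v) with hs
  have hmeet : (1 - s) • u + s • v = (1 - t) • p + t • q := by
    ext
    · show (1 - s) * u.1 + s * v.1 = (1 - t) * p.1 + t * q.1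
      rw [ht, hs]; field_simp; simp only [sideVal]; ring
    · show (1 - s) * u.2 + s * v.2 = (1 - t) * p.2 + t * q.2
      rw [ht, hs]; field_simp; simp only [sideVal]; ring
  refine Set.not_disjoint_iff.mpr
    ⟨(1 - t) • p + t • q, ?_, 1 - t, t, by linarith, ht0, by ring, rfl⟩
  exact ⟨1 - s, s, by linarith, hs0, by ring, hmeet⟩

lemma sin_add_sin_sub_sin_add (x y : ℝ) :
    sin x + sin y - sin (x + y) = 4 * sin (x / 2) * sin (y / 2) * sin ((x + y) / 2) := by
  obtain ⟨a, rfl⟩ : ∃ a, x = 2 * a := ⟨x / 2, by ring⟩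
  obtain ⟨b, rfl⟩ : ∃ b, y = 2 * b := ⟨y / 2, by ring⟩
  simp only [mul_div_cancel_left₀ _ (two_ne_zero' ℝ), ← mul_add, sin_two_mul, sin_add,
    cos_add]
  linear_combination (-2 * sin b * cos b) * sin_sq_add_cos_sq a
    - (2 * sin a * cos a) * sin_sq_add_cos_sq b

section Circle

variable {c : ℝ × ℝ} {R α β γ δ : ℝ}

lemma sideVal_circlePt (c : ℝ × ℝ) (R α β γ : ℝ) :
    sideVal (circlePt c R α) (circlePt c R β) (circlePt c R γ)
      = 4 * R ^ 2 * sin ((β - α) / 2) * sin ((γ - β) / 2) * sin ((γ - α) / 2) := by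
  have h := sin_add_sin_sub_sin_add (β - α) (γ - β)
  rw [show β - α + (γ - β) = γ - α by ring] at h
  calc sideVal (circlePt c R α) (circlePt c R β) (circlePt c R γ)
      = R ^ 2 * (sin (β - α) + sin (γ - β) - sin (γ - α)) := by
        simp only [sideVal, circlePt, sin_sub]; ring
    _ = _ := by rw [h]; ring

lemma sideVal_circlePt_center (c : ℝ × ℝ) (R α β : ℝ) :
    sideVal (circlePt c R α) (circlePt c R β) c = R ^ 2 * sin (β - α) := by
  simp only [sideVal, circlePt, sin_sub]; ring

lemma sideVal_circlePt_pos (hR : R ≠ 0) (hαβ : α < β) (hβγ : β < γ)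
    (hγα : γ < α + 2 * π) :
    0 < sideVal (circlePt c R α) (circlePt c R β) (circlePt c R γ) := by
  have hsin : ∀ {x y : ℝ}, x < y → y < x + 2 * π → 0 < sin ((y - x) / 2) := fun hxy hyx =>
    sin_pos_of_pos_of_lt_pi (by linarith) (by linarith)
  rw [sideVal_circlePt]
  have := hsin hαβ (by linarith)
  have := hsin hβγ (by linarith)
  have := hsin (hαβ.trans hβγ) hγα
  positivity

lemma sideVal_circlePt_center_pos (hR : R ≠ 0) (hαβ : α < β) (hβα : β < α + π) :
    0 < sideVal (circlePt c R α) (circlePt c R β) c := by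
  rw [sideVal_circlePt_center]
  have := sin_pos_of_pos_of_lt_pi (sub_pos.mpr hαβ) (by linarith)
  positivity

lemma not_disjoint_chord_chord (hR : R ≠ 0) (hαβ : α < β) (hβγ : β < γ) (hγδ : γ < δ)
    (hδα : δ < α + 2 * π) :
    ¬ Disjoint (openSegment ℝ (circlePt c R α) (circlePt c R γ))
      (openSegment ℝ (circlePt c R β) (circlePt c R δ)) := by
  apply not_disjoint_openSegment_of_sideVal_mul_neg
  · rw [sideVal_swap_right]
    exact mul_neg_of_neg_of_pos (neg_neg_of_pos (sideVal_circlePt_pos hR hαβ hβγ (by linarith)))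
      (sideVal_circlePt_pos hR (hαβ.trans hβγ) hγδ hδα)
  · rw [← circlePt_add_two_pi c R α, sideVal_swap_right (circlePt c R β) (circlePt c R γ)]
    exact mul_neg_of_pos_of_neg (sideVal_circlePt_pos hR (hβγ.trans hγδ) hδα (by linarith))
      (neg_neg_of_pos (sideVal_circlePt_pos hR hβγ hγδ (by linarith)))

lemma not_disjoint_chord_radius (hR : R ≠ 0) (hαβ : α < β) (hβγ : β < γ)
    (hγα : γ < α + π) :
    ¬ Disjoint (openSegment ℝ (circlePt c R α) (circlePt c R γ))
      (openSegment ℝ (circlePt c R β) c) := by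
  apply not_disjoint_openSegment_of_sideVal_mul_neg
  · rw [sideVal_swap_right]
    exact mul_neg_of_neg_of_pos
      (neg_neg_of_pos (sideVal_circlePt_pos hR hαβ hβγ (by linarith [pi_pos])))
      (sideVal_circlePt_center_pos hR (hαβ.trans hβγ) hγα)
  · rw [← sideVal_rotate (circlePt c R α), ← sideVal_rotate (circlePt c R γ),
      sideVal_swap (circlePt c R β) (circlePt c R γ)]
    exact mul_neg_of_pos_of_neg (sideVal_circlePt_center_pos hR hαβ (by linarith))
      (neg_neg_of_pos (sideVal_circlePt_center_pos hR hβγ (by linarith)))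

end Circle

section Wheel

variable {n : ℕ} (h : 0 < 2 * n - 1)

lemma cir_eq_cir_iff {a b : ℕ} : cir n h a = cir n h b ↔ (a : ZMod (2 * n - 1)) = b := by
  simp [cir, Fin.ext_iff, ZMod.natCast_eq_natCast_iff']

lemma cir_val (e : Fin (2 * n - 1)) : cir n h e.val = some e := by
  simp [cir, Nat.mod_eq_of_lt e.isLt]

lemma cir_add_ne (k : ℕ) {a : ℕ} (ha : 0 < a) (haM : a < 2 * n - 1) :
    cir n h (k + a) ≠ cir n h k := by
  rw [Ne, cir_eq_cir_iff, Nat.cast_add, add_eq_left, ZMod.natCast_eq_zero_iff]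
  exact fun hdvd => ha.ne' (Nat.eq_zero_of_dvd_of_lt hdvd haM)

lemma exists_cir_add_eq (k : ℕ) (e : Fin (2 * n - 1)) :
    ∃ t < 2 * n - 1, cir n h (k + t) = some e := by
  have : NeZero (2 * n - 1) := ⟨h.ne'⟩
  refine ⟨((e.val : ZMod (2 * n - 1)) - k).val, ZMod.val_lt _, ?_⟩
  rw [← cir_val h e, cir_eq_cir_iff, Nat.cast_add, ZMod.natCast_zmod_val]
  ring

lemma boundary_cir_cir_succ (k : ℕ) : Boundary (cir n h k) (cir n h (k + 1)) :=
  Or.inl (Nat.mod_add_mod k _ 1)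

lemma wpos_cir (c : ℝ × ℝ) (R θ : ℝ) (k : ℕ) :
    wpos n c R θ (cir n h k) = circlePt c R (θ + k * (2 * π / (2 * n - 1))) := by
  have hM : (2 * n - 1 : ℝ) ≠ 0 := by
    have : (1 : ℝ) ≤ n := by exact_mod_cast (show 1 ≤ n by omega)
    linarith
  have hk : ((2 * n - 1 : ℕ) : ℝ) * ((k / (2 * n - 1) : ℕ) : ℝ)
      + ((k % (2 * n - 1) : ℕ) : ℝ) = k := by
    exact_mod_cast Nat.div_add_mod k (2 * n - 1)
  rw [Nat.cast_sub (by omega), Nat.cast_mul, Nat.cast_ofNat, Nat.cast_one] at hk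
  have hangle : θ + k * (2 * π / (2 * n - 1))
      = θ + 2 * π * ((k % (2 * n - 1) : ℕ) : ℝ) / (2 * n - 1)
        + (k / (2 * n - 1) : ℕ) * (2 * π) := by
    rw [← hk]; field_simp; ring
  simp only [wpos, cir, circlePt, hangle, cos_add_nat_mul_two_pi, sin_add_nat_mul_two_pi]

lemma wheel_step_pos (hn : 0 < n) : 0 < 2 * π / (2 * n - 1 : ℝ) := by
  have : (1 : ℝ) ≤ n := by exact_mod_cast hn
  exact div_pos two_pi_pos (by linarith)

lemma wheel_step_mul_lt {t : ℕ} (ht : t < 2 * n - 1) :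
    t * (2 * π / (2 * n - 1 : ℝ)) < 2 * π := by
  have hM : (t : ℝ) + 1 ≤ 2 * n - 1 := by
    have : t + 2 ≤ 2 * n := by omega
    have : (t : ℝ) + 2 ≤ 2 * n := by exact_mod_cast this
    linarith
  have hM0 : (0 : ℝ) < 2 * n - 1 := by linarith [t.cast_nonneg (α := ℝ)]
  rw [mul_div_assoc', div_lt_iff₀ hM0]
  nlinarith [pi_pos]

variable {c : ℝ × ℝ} {R θ : ℝ}

lemma wheel_chord_crosses_radius (hR : R ≠ 0) {k d : ℕ} (hd : 1 < d) (hdn : d ≤ n - 1) :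
    ¬ Disjoint (openSegment ℝ (wpos n c R θ (cir n h k)) (wpos n c R θ (cir n h (k + d))))
      (openSegment ℝ (wpos n c R θ (cir n h (k + 1))) (wpos n c R θ none)) := by
  have hε := wheel_step_pos (n := n) (by omega)
  have h2d := wheel_step_mul_lt (show 2 * d < 2 * n - 1 by omega)
  have hd' : (1 : ℝ) < d := by exact_mod_cast hd
  simp only [wpos_cir h]
  push_cast
  exact not_disjoint_chord_radius hR (by nlinarith) (by nlinarith) (by push_cast at h2d; nlinarith)

lemma wheel_chords_cross (hR : R ≠ 0) {k d t : ℕ} (hd : 1 < d) (hdt : d < t)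
    (ht : t < 2 * n - 1) :
    ¬ Disjoint (openSegment ℝ (wpos n c R θ (cir n h k)) (wpos n c R θ (cir n h (k + d))))
      (openSegment ℝ (wpos n c R θ (cir n h (k + 1))) (wpos n c R θ (cir n h (k + t)))) := by
  have hε := wheel_step_pos (n := n) (by omega)
  have htM := wheel_step_mul_lt ht
  have hd' : (1 : ℝ) < d := by exact_mod_cast hd
  have hdt' : (d : ℝ) < t := by exact_mod_cast hdt
  simp only [wpos_cir h]
  push_cast
  exact not_disjoint_chord_chord hR (by nlinarith) (by nlinarith) (by nlinarith) (by nlinarith)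

end Wheel

section NoChords

variable {n : ℕ} {c : ℝ × ℝ} {R θ : ℝ} {G : SimpleGraph (WV n)}

theorem not_adj_cir_cir_add (h : 0 < 2 * n - 1) (hR : R ≠ 0) (hG : ∀ v, ∃ w, G.Adj v w)
    (hNC : NonCrossing (wpos n c R θ) G) (hb : ∀ a b, G.Adj a b → ¬ Boundary a b)
    {d : ℕ} (hd1 : 1 ≤ d) (hdn : d ≤ n - 1) (k : ℕ) :
    ¬ G.Adj (cir n h k) (cir n h (k + d)) := by
  induction d using Nat.strong_induction_on generalizing k with
  | _ d ih =>
  intro hA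
  rcases hd1.eq_or_lt with rfl | hd
  · exact hb _ _ hA (boundary_cir_cir_succ h k)
  obtain ⟨q, hq⟩ := hG (cir n h (k + 1))
  cases q with
  | none => exact wheel_chord_crosses_radius h hR hd hdn (hNC _ _ _ _ hA hq (by simp [cir]))
  | some e =>
    obtain ⟨t, htM, het⟩ := exists_cir_add_eq h k e
    rw [← het] at hq
    rcases show t = 0 ∨ t = 1 ∨ (2 ≤ t ∧ t ≤ d) ∨ d < t by omega with
      rfl | rfl | ⟨ht2, htd⟩ | hdt
    · exact ih 1 hd le_rfl (by omega) k hq.symm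
    · exact G.irrefl hq
    · exact ih (t - 1) (by omega) (by omega) (by omega) (k + 1)
        (by rwa [show k + 1 + (t - 1) = k + t by omega])
    · have hne : s(cir n h k, cir n h (k + d)) ≠ s(cir n h (k + 1), cir n h (k + t)) := by
        rw [Ne, Sym2.eq_iff]
        rintro (⟨he, -⟩ | ⟨he, -⟩)
        · exact cir_add_ne h k one_pos (by omega) he.symm
        · exact cir_add_ne h k (by omega) htM he.symm
      exact wheel_chords_cross h hR hd hdt htM (hNC _ _ _ _ hA hq hne)

lemma exists_cir_add_of_adj {x y : Fin (2 * n - 1)} (hxy : G.Adj (some x) (some y)) :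
    ∃ k d, 1 ≤ d ∧ d ≤ n - 1 ∧ G.Adj (cir n x.pos k) (cir n x.pos (k + d)) := by
  obtain ⟨t, htM, het⟩ := exists_cir_add_eq x.pos x.val y
  have ht0 : t ≠ 0 := by
    rintro rfl
    rw [Nat.add_zero, cir_val] at het
    exact G.irrefl (het ▸ hxy)
  by_cases htn : t ≤ n - 1
  · exact ⟨x.val, t, by omega, htn, by rwa [het, cir_val]⟩
  · refine ⟨x.val + t, 2 * n - 1 - t, by omega, by omega, ?_⟩
    have hx : cir n x.pos (x.val + t + (2 * n - 1 - t)) = some x := by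
      rw [show x.val + t + (2 * n - 1 - t) = x.val + (2 * n - 1) by omega, ← cir_val x.pos,
        cir_eq_cir_iff]
      simp
    rw [het, hx]
    exact hxy.symm

theorem not_adj_some_some (hR : R ≠ 0) (hG : ∀ v, ∃ w, G.Adj v w)
    (hNC : NonCrossing (wpos n c R θ) G) (hb : ∀ a b, G.Adj a b → ¬ Boundary a b)
    (x y : Fin (2 * n - 1)) : ¬ G.Adj (some x) (some y) := fun hxy => by
  obtain ⟨k, d, hd1, hdn, hA⟩ := exists_cir_add_of_adj hxy
  exact not_adj_cir_cir_add x.pos hR hG hNC hb hd1 hdn k hA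

end NoChords

lemma IsPartition.eq_of_adj {n : ℕ} {T : Fin n → SimpleGraph (WV n)} (hT : IsPartition T)
    {i j : Fin n} {a b : WV n} (hi : (T i).Adj a b) (hj : (T j).Adj a b) : i = j :=
  (hT a b hi.ne).unique hi hj

end WheelCfg

open WheelCfg in
/-- In any partition of the complete geometric graph on a regular wheel configuration into
plane spanning trees, every tree has at least one boundary edge. -/
theorem stmt2 (n : ℕ) (hn : 2 ≤ n) (c : ℝ × ℝ) (R θ : ℝ) (hR : 0 < R)
    (T : Fin n → SimpleGraph (WV n)) (hpart : IsPartition T)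
    (hplane : ∀ i, PlaneSpanningTree (wpos n c R θ) (T i)) :
    ∀ i : Fin n, ∃ a b : WV n, (T i).Adj a b ∧ Boundary a b := by
  intro i
  by_contra hnone
  push Not at hnone
  have : NeZero (2 * n - 1) := ⟨by omega⟩
  have : Nontrivial (Fin n) := Fin.nontrivial_iff_two_le.mpr hn
  have hdeg : ∀ j v, ∃ w, (T j).Adj v w := fun j =>
    (hplane j).1.connected.preconnected.exists_adj_of_nontrivial
  obtain ⟨j, hji⟩ := exists_ne i
  obtain ⟨_ | e, he⟩ := hdeg j none
  · exact (T j).irrefl he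
  obtain ⟨_ | w, hw⟩ := hdeg i (some e)
  · exact hji (hpart.eq_of_adj he hw.symm)
  · exact not_adj_some_some hR.ne' (hdeg i) (hplane i).2 hnone e w hw
end

section
/- Let P be a set of points in general position in the plane, and let ℓ be a halving line of P passing through u, v ∈ P, with P_1 and P_2 the sets of points of P strictly on the two sides of ℓ. For any choice of w_1 ∈ P_1 and w_2 ∈ P_2, the geometric graph T with vertex set P and edge set {w_1u, uv, vw_2} ∪ {w_1x : x ∈ P_1, x ≠ w_1} ∪ {w_2y : y ∈ P_2, y ≠ w_2} is a plane spanning tree of P. -/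
namespace Halving

/-- Signed side of `p` with respect to the oriented line through `u`, `v`. -/
def sideVal (u v p : ℝ × ℝ) : ℝ :=
  (v.1 - u.1) * (p.2 - u.2) - (v.2 - u.2) * (p.1 - u.1)

/-- General position: no three distinct points of `P` are collinear. -/
def GenPos (P : Finset (ℝ × ℝ)) : Prop :=
  ∀ p ∈ P, ∀ q ∈ P, ∀ r ∈ P, p ≠ q → p ≠ r → q ≠ r →
    ¬ Collinear ℝ ({p, q, r} : Set (ℝ × ℝ))

/-- Points of `P` strictly on the negative side of the line through `u`, `v`. -/
noncomputable def negSide (P : Finset (ℝ × ℝ)) (u v : ℝ × ℝ) : Finset (ℝ × ℝ) :=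
  P.filter (fun p => sideVal u v p < 0)

/-- Points of `P` strictly on the positive side of the line through `u`, `v`. -/
noncomputable def posSide (P : Finset (ℝ × ℝ)) (u v : ℝ × ℝ) : Finset (ℝ × ℝ) :=
  P.filter (fun p => 0 < sideVal u v p)

/-- A `k`-halving line of a set `P` of `2m` points: a line through two points `u ≠ v` of `P`
splitting the remaining points into parts of sizes `m-1-k` and `m-1+k`.  `k = 0` is a
halving line. -/
def IsKHalving (P : Finset (ℝ × ℝ)) (m k : ℕ) (u v : ℝ × ℝ) : Prop :=
  u ∈ P ∧ v ∈ P ∧ u ≠ v ∧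
  min (negSide P u v).card (posSide P u v).card = m - 1 - k ∧
  max (negSide P u v).card (posSide P u v).card = m - 1 + k

/-- A halving line. -/
abbrev IsHalving (P : Finset (ℝ × ℝ)) (m : ℕ) (u v : ℝ × ℝ) : Prop := IsKHalving P m 0 u v

/-- Non-crossing geometric graph on points of the plane. -/
def NonCrossingG (G : SimpleGraph (ℝ × ℝ)) : Prop :=
  ∀ a b c d : ℝ × ℝ, G.Adj a b → G.Adj c d → s(a,b) ≠ s(c,d) →
    Disjoint (openSegment ℝ a b) (openSegment ℝ c d)

/-- A plane spanning tree of a finite point set `P`: all edges join points of `P`,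
the graph induced on `P` is a tree, and no two edges cross. -/
def PlaneSpanningTreeOn (P : Finset (ℝ × ℝ)) (G : SimpleGraph (ℝ × ℝ)) : Prop :=
  (∀ a b, G.Adj a b → a ∈ P ∧ b ∈ P) ∧ (G.induce (↑P : Set (ℝ × ℝ))).IsTree ∧ NonCrossingG G

/-- Partition of the edge set of the complete geometric graph on `P`. -/
def IsGeomPartition (P : Finset (ℝ × ℝ)) {n : ℕ} (T : Fin n → SimpleGraph (ℝ × ℝ)) : Prop :=
  ∀ a b : ℝ × ℝ, a ∈ P → b ∈ P → a ≠ b → ∃! i : Fin n, (T i).Adj a b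

/-- The number of halving lines of `P` (as unordered pairs of points). -/
noncomputable def halvingCount (P : Finset (ℝ × ℝ)) (m : ℕ) : ℕ :=
  Set.ncard {e : Sym2 (ℝ × ℝ) | ∃ u v, e = s(u,v) ∧ IsHalving P m u v}

/-- An `h`-labeling: a bijective labeling `v_0, …, v_{2n-1}` of `P` such that for every `i`
the line through `v_i` and `v_{i+n}` is a halving line. -/
def IsHLabeling (P : Finset (ℝ × ℝ)) (n : ℕ) (v : Fin (2*n) → ℝ × ℝ) : Prop :=
  Function.Injective v ∧ Set.range v = (↑P : Set (ℝ × ℝ)) ∧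
  ∀ i : Fin (2*n), IsHalving P n (v i) (v (i + ⟨n % (2*n), Nat.mod_lt _ i.pos⟩))

/-- Convex position: every point of `P` is outside the convex hull of the others. -/
def ConvexPos (P : Finset (ℝ × ℝ)) : Prop :=
  ∀ p ∈ P, p ∉ convexHull ℝ (↑(P.erase p) : Set (ℝ × ℝ))

end Halving

namespace Halving

lemma sideVal_combo (u v a b : ℝ × ℝ) {t s : ℝ} (h : t + s = 1) :
    sideVal u v (t • a + s • b) = t * sideVal u v a + s * sideVal u v b := by
  have hs : s = 1 - t := by linarith
  subst hs
  simp only [sideVal, Prod.smul_fst, Prod.smul_snd, Prod.fst_add, Prod.snd_add, smul_eq_mul]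
  ring

lemma sideVal_left (u v : ℝ × ℝ) : sideVal u v u = 0 := by simp only [sideVal]; ring

lemma sideVal_right (u v : ℝ × ℝ) : sideVal u v v = 0 := by simp only [sideVal]; ring

lemma neg_on_openSegment {u v a b : ℝ × ℝ} (ha : sideVal u v a < 0) (hb : sideVal u v b ≤ 0) :
    ∀ p ∈ openSegment ℝ a b, sideVal u v p < 0 := by
  rintro p ⟨t, s, ht, hs, hts, rfl⟩
  rw [sideVal_combo u v a b hts]
  nlinarith

lemma pos_on_openSegment {u v a b : ℝ × ℝ} (ha : 0 < sideVal u v a) (hb : 0 ≤ sideVal u v b) :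
    ∀ p ∈ openSegment ℝ a b, 0 < sideVal u v p := by
  rintro p ⟨t, s, ht, hs, hts, rfl⟩
  rw [sideVal_combo u v a b hts]
  nlinarith

lemma zero_on_openSegment {u v a b : ℝ × ℝ} (ha : sideVal u v a = 0) (hb : sideVal u v b = 0) :
    ∀ p ∈ openSegment ℝ a b, sideVal u v p = 0 := by
  rintro p ⟨t, s, ht, hs, hts, rfl⟩
  rw [sideVal_combo u v a b hts, ha, hb]
  ring

lemma collinear_of_sideVal_eq_zero {u v p : ℝ × ℝ} (h : sideVal u v p = 0) :
    Collinear ℝ ({u, v, p} : Set (ℝ × ℝ)) := by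
  rcases eq_or_ne u v with rfl | huv
  · rw [Set.insert_idem]
    exact collinear_pair ℝ u p
  rw [collinear_iff_of_mem (Set.mem_insert u {v, p})]
  refine ⟨v - u, ?_⟩
  intro q hq
  simp only [Set.mem_insert_iff, Set.mem_singleton_iff] at hq
  rcases hq with rfl | rfl | rfl
  · exact ⟨0, by simp⟩
  · exact ⟨1, by simp⟩
  by_cases hd1 : v.1 - u.1 = 0
  · have hd2 : v.2 - u.2 ≠ 0 := by
      intro hd2
      exact huv (Prod.ext (by linarith) (by linarith)).symm
    have hq1 : q.1 = u.1 := by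
      simp only [sideVal, hd1] at h
      have : q.1 - u.1 = 0 := by
        rcases mul_eq_zero.mp (by linarith : (v.2 - u.2) * (q.1 - u.1) = 0) with h' | h'
        · exact absurd h' hd2
        · exact h'
      linarith
    refine ⟨(q.2 - u.2) / (v.2 - u.2), ?_⟩
    have : ((q.2 - u.2) / (v.2 - u.2)) • (v - u) +ᵥ u =
        (((q.2 - u.2) / (v.2 - u.2)) * (v.1 - u.1) + u.1,
         ((q.2 - u.2) / (v.2 - u.2)) * (v.2 - u.2) + u.2) := rfl
    rw [this]
    refine Prod.ext ?_ ?_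
    · simp [hd1, hq1]
    · simp only []
      field_simp
      ring
  · refine ⟨(q.1 - u.1) / (v.1 - u.1), ?_⟩
    have he : ((q.1 - u.1) / (v.1 - u.1)) • (v - u) +ᵥ u =
        (((q.1 - u.1) / (v.1 - u.1)) * (v.1 - u.1) + u.1,
         ((q.1 - u.1) / (v.1 - u.1)) * (v.2 - u.2) + u.2) := rfl
    rw [he]
    refine Prod.ext ?_ ?_
    · field_simp
      ring
    · simp only [sideVal] at h
      field_simp
      nlinarith [h]

lemma collinear_of_mem_openSegments {w x y p : ℝ × ℝ}
    (hp1 : p ∈ openSegment ℝ w x) (hp2 : p ∈ openSegment ℝ w y) :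
    Collinear ℝ ({w, x, y} : Set (ℝ × ℝ)) := by
  obtain ⟨t1, s1, ht1, hs1, hts1, hp1⟩ := hp1
  obtain ⟨t2, s2, ht2, hs2, hts2, hp2⟩ := hp2
  have h1 : t1 * w.1 + s1 * x.1 = p.1 := congrArg Prod.fst hp1
  have h1' : t1 * w.2 + s1 * x.2 = p.2 := congrArg Prod.snd hp1
  have h2 : t2 * w.1 + s2 * y.1 = p.1 := congrArg Prod.fst hp2
  have h2' : t2 * w.2 + s2 * y.2 = p.2 := congrArg Prod.snd hp2
  have e1 : s1 * (x.1 - w.1) = s2 * (y.1 - w.1) := by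
    linear_combination h1 - h2 - w.1 * hts1 + w.1 * hts2
  have e2 : s1 * (x.2 - w.2) = s2 * (y.2 - w.2) := by
    linear_combination h1' - h2' - w.2 * hts1 + w.2 * hts2
  apply collinear_of_sideVal_eq_zero (u := w) (v := x) (p := y)
  have hy1 : y.1 - w.1 = (s1 / s2) * (x.1 - w.1) := by
    field_simp
    linarith [e1]
  have hy2 : y.2 - w.2 = (s1 / s2) * (x.2 - w.2) := by
    field_simp
    linarith [e2]
  simp only [sideVal]
  rw [hy1, hy2]
  ring

lemma disjoint_openSegment_same_end {w x y : ℝ × ℝ}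
    (h : ¬ Collinear ℝ ({w, x, y} : Set (ℝ × ℝ))) :
    Disjoint (openSegment ℝ w x) (openSegment ℝ w y) := by
  rw [Set.disjoint_left]
  intro p hp1 hp2
  exact h (collinear_of_mem_openSegments hp1 hp2)

lemma reachable_inv {V : Type*} {G : SimpleGraph V} {Q : V → Prop}
    (h : ∀ a b, G.Adj a b → (Q a ↔ Q b)) {x y : V} (hr : G.Reachable x y) : Q x ↔ Q y := by
  obtain ⟨w⟩ := hr
  induction w with
  | nil => rfl
  | cons hadj _ ih => exact (h _ _ hadj).trans ih

lemma sym2_both {α : Type*} {Q : α → Prop} {p q c d : α} (h : s(p,q) = s(c,d))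
    (hc : Q c) (hd : Q d) : Q p ∧ Q q := by
  rcases Sym2.eq_iff.mp h with ⟨rfl, rfl⟩ | ⟨rfl, rfl⟩
  · exact ⟨hc, hd⟩
  · exact ⟨hd, hc⟩

lemma sym2_iff_of_true {α : Type*} {Q : α → Prop} {p q c d : α} (h : s(p,q) = s(c,d))
    (hc : Q c) (hd : Q d) : Q p ↔ Q q := by
  obtain ⟨h1, h2⟩ := sym2_both h hc hd
  exact iff_of_true h1 h2

lemma sym2_iff_of_false {α : Type*} {Q : α → Prop} {p q c d : α} (h : s(p,q) = s(c,d))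
    (hc : ¬ Q c) (hd : ¬ Q d) : Q p ↔ Q q := by
  obtain ⟨h1, h2⟩ := sym2_both (Q := fun z => ¬ Q z) h hc hd
  exact iff_of_false h1 h2

end Halving

open Halving in
/-- Given a halving line of `P` through `u, v` with sides `P_1, P_2`, and `w_1 ∈ P_1`,
`w_2 ∈ P_2`, the graph with edges `{w_1u, uv, vw_2} ∪ {w_1x : x ∈ P_1} ∪ {w_2y : y ∈ P_2}`
is a plane spanning tree of `P`. -/
theorem stmt9 (P : Finset (ℝ × ℝ)) (m : ℕ) (hgp : GenPos P) (hcard : P.card = 2*m)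
    (u v w1 w2 : ℝ × ℝ) (hh : IsHalving P m u v)
    (hw1 : w1 ∈ negSide P u v) (hw2 : w2 ∈ posSide P u v) :
    PlaneSpanningTreeOn P (SimpleGraph.fromEdgeSet
      ({s(w1,u), s(u,v), s(v,w2)} ∪
        (fun x => s(w1,x)) '' ((↑(negSide P u v) : Set (ℝ × ℝ)) \ {w1}) ∪
        (fun y => s(w2,y)) '' ((↑(posSide P u v) : Set (ℝ × ℝ)) \ {w2}))) := by
  classical
  obtain ⟨huP, hvP, huv, -, -⟩ := hh
  set N := negSide P u v with hNdef
  set Q := posSide P u v with hQdef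
  set S : Set (Sym2 (ℝ × ℝ)) := {s(w1,u), s(u,v), s(v,w2)} ∪
        (fun x => s(w1,x)) '' ((↑N : Set (ℝ × ℝ)) \ {w1}) ∪
        (fun y => s(w2,y)) '' ((↑Q : Set (ℝ × ℝ)) \ {w2}) with hSdef
  set G := SimpleGraph.fromEdgeSet S with hGdef
  have hmemN : ∀ x : ℝ × ℝ, x ∈ N ↔ x ∈ P ∧ sideVal u v x < 0 := by
    intro x; rw [hNdef]; unfold negSide; exact Finset.mem_filter
  have hmemQ : ∀ x : ℝ × ℝ, x ∈ Q ↔ x ∈ P ∧ 0 < sideVal u v x := by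
    intro x; rw [hQdef]; unfold posSide; exact Finset.mem_filter
  have hw1P : w1 ∈ P := ((hmemN w1).mp hw1).1
  have hw1s : sideVal u v w1 < 0 := ((hmemN w1).mp hw1).2
  have hw2P : w2 ∈ P := ((hmemQ w2).mp hw2).1
  have hw2s : 0 < sideVal u v w2 := ((hmemQ w2).mp hw2).2
  have hsu : sideVal u v u = 0 := sideVal_left u v
  have hsv : sideVal u v v = 0 := sideVal_right u v
  have hw1u : w1 ≠ u := by intro h; rw [h, hsu] at hw1s; exact lt_irrefl 0 hw1s
  have hw1v : w1 ≠ v := by intro h; rw [h, hsv] at hw1s; exact lt_irrefl 0 hw1s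
  have hw2u : w2 ≠ u := by intro h; rw [h, hsu] at hw2s; exact lt_irrefl 0 hw2s
  have hw2v : w2 ≠ v := by intro h; rw [h, hsv] at hw2s; exact lt_irrefl 0 hw2s
  have hw1w2 : w1 ≠ w2 := by intro h; rw [h] at hw1s; linarith
  -- facts about the two endpoint families
  have hNfact : ∀ x, (x = u ∨ x ∈ N) → x ∈ P ∧ sideVal u v x ≤ 0 := by
    rintro x (rfl | hx)
    · exact ⟨huP, le_of_eq hsu⟩
    · exact ⟨((hmemN x).mp hx).1, le_of_lt ((hmemN x).mp hx).2⟩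
  have hQfact : ∀ y, (y = v ∨ y ∈ Q) → y ∈ P ∧ 0 ≤ sideVal u v y := by
    rintro y (rfl | hy)
    · exact ⟨hvP, hsv.ge⟩
    · exact ⟨((hmemQ y).mp hy).1, le_of_lt ((hmemQ y).mp hy).2⟩
  -- classification of edges
  have hSclass : ∀ e ∈ S,
      (∃ x, (x = u ∨ x ∈ N) ∧ x ≠ w1 ∧ e = s(w1, x)) ∨
      e = s(u, v) ∨
      (∃ y, (y = v ∨ y ∈ Q) ∧ y ≠ w2 ∧ e = s(w2, y)) := by
    intro e he
    rw [hSdef] at he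
    simp only [Set.mem_union, Set.mem_insert_iff, Set.mem_singleton_iff, Set.mem_image,
      Set.mem_diff, Finset.mem_coe] at he
    rcases he with ((he | he | he) | ⟨x, ⟨hxN, hxw1⟩, rfl⟩) | ⟨y, ⟨hyQ, hyw2⟩, rfl⟩
    · exact Or.inl ⟨u, Or.inl rfl, Ne.symm hw1u, he⟩
    · exact Or.inr (Or.inl he)
    · exact Or.inr (Or.inr ⟨v, Or.inl rfl, Ne.symm hw2v, he.trans Sym2.eq_swap⟩)
    · exact Or.inl ⟨x, Or.inr hxN, hxw1, rfl⟩
    · exact Or.inr (Or.inr ⟨y, Or.inr hyQ, hyw2, rfl⟩)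
  have hS1 : s(w1,u) ∈ S := by rw [hSdef]; simp
  have hS2 : s(u,v) ∈ S := by rw [hSdef]; simp
  have hS3 : s(v,w2) ∈ S := by rw [hSdef]; simp
  have hSx : ∀ x ∈ N, x ≠ w1 → s(w1,x) ∈ S := by
    intro x hx hxw
    rw [hSdef]
    exact Set.mem_union_left _ (Set.mem_union_right _ ⟨x, ⟨hx, by simpa using hxw⟩, rfl⟩)
  have hSy : ∀ y ∈ Q, y ≠ w2 → s(w2,y) ∈ S := by
    intro y hy hyw
    rw [hSdef]
    exact Set.mem_union_right _ ⟨y, ⟨hy, by simpa using hyw⟩, rfl⟩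
  have hGadj : ∀ a b : ℝ × ℝ, G.Adj a b ↔ s(a,b) ∈ S ∧ a ≠ b := by
    intro a b; rw [hGdef]; exact SimpleGraph.fromEdgeSet_adj S
  have hclass : ∀ a b : ℝ × ℝ, G.Adj a b →
      ((∃ x, (x = u ∨ x ∈ N) ∧ x ≠ w1 ∧ s(a,b) = s(w1,x) ∧
          openSegment ℝ a b = openSegment ℝ w1 x) ∨
       (s(a,b) = s(u,v) ∧ openSegment ℝ a b = openSegment ℝ u v) ∨
       (∃ y, (y = v ∨ y ∈ Q) ∧ y ≠ w2 ∧ s(a,b) = s(w2,y) ∧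
          openSegment ℝ a b = openSegment ℝ w2 y)) := by
    intro a b hab
    obtain ⟨hmem, hne⟩ := (hGadj a b).mp hab
    rcases hSclass _ hmem with ⟨x, hx, hxw, he⟩ | he | ⟨y, hy, hyw, he⟩
    · refine Or.inl ⟨x, hx, hxw, he, ?_⟩
      rcases Sym2.eq_iff.mp he with ⟨rfl, rfl⟩ | ⟨rfl, rfl⟩
      · rfl
      · exact openSegment_symm ℝ _ _
    · refine Or.inr (Or.inl ⟨he, ?_⟩)
      rcases Sym2.eq_iff.mp he with ⟨rfl, rfl⟩ | ⟨rfl, rfl⟩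
      · rfl
      · exact openSegment_symm ℝ _ _
    · refine Or.inr (Or.inr ⟨y, hy, hyw, he, ?_⟩)
      rcases Sym2.eq_iff.mp he with ⟨rfl, rfl⟩ | ⟨rfl, rfl⟩
      · rfl
      · exact openSegment_symm ℝ _ _
  -- all edges join points of P
  have hinP : ∀ a b, G.Adj a b → a ∈ P ∧ b ∈ P := by
    intro a b hab
    rcases hclass a b hab with ⟨x, hx, -, he, -⟩ | ⟨he, -⟩ | ⟨y, hy, -, he, -⟩
    · exact sym2_both (Q := fun z => z ∈ P) he hw1P (hNfact x hx).1
    · exact sym2_both (Q := fun z => z ∈ P) he huP hvP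
    · exact sym2_both (Q := fun z => z ∈ P) he hw2P (hQfact y hy).1
  refine ⟨hinP, ⟨?_, ?_⟩, ?_⟩
  · -- connectivity
    have hpart : ∀ p ∈ P, p = u ∨ p = v ∨ p ∈ N ∨ p ∈ Q := by
      intro p hp
      by_cases h1 : p = u
      · exact Or.inl h1
      by_cases h2 : p = v
      · exact Or.inr (Or.inl h2)
      have hnc := hgp u huP v hvP p hp huv (Ne.symm h1) (Ne.symm h2)
      have hne : sideVal u v p ≠ 0 := fun h => hnc (collinear_of_sideVal_eq_zero h)
      rcases lt_trichotomy (sideVal u v p) 0 with h | h | h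
      · exact Or.inr (Or.inr (Or.inl ((hmemN p).mpr ⟨hp, h⟩)))
      · exact absurd h hne
      · exact Or.inr (Or.inr (Or.inr ((hmemQ p).mpr ⟨hp, h⟩)))
    have hadjG : ∀ (x y : ℝ × ℝ) (hx : x ∈ P) (hy : y ∈ P), G.Adj x y →
        (G.induce (↑P : Set (ℝ × ℝ))).Adj ⟨x, hx⟩ ⟨y, hy⟩ := fun _ _ _ _ h => h
    have ha1 : G.Adj w1 u := (hGadj w1 u).mpr ⟨hS1, hw1u⟩
    have ha2 : G.Adj u v := (hGadj u v).mpr ⟨hS2, huv⟩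
    have ha3 : G.Adj v w2 := (hGadj v w2).mpr ⟨hS3, Ne.symm hw2v⟩
    have hreach : ∀ p : (↑P : Set (ℝ × ℝ)), (G.induce (↑P : Set (ℝ × ℝ))).Reachable p ⟨w1, hw1P⟩ := by
      rintro ⟨p, hp⟩
      have hp' : p ∈ P := hp
      have hru : (G.induce (↑P : Set (ℝ × ℝ))).Reachable ⟨u, huP⟩ ⟨w1, hw1P⟩ :=
        (hadjG u w1 huP hw1P ha1.symm).reachable
      have hrv : (G.induce (↑P : Set (ℝ × ℝ))).Reachable ⟨v, hvP⟩ ⟨w1, hw1P⟩ :=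
        ((hadjG v u hvP huP ha2.symm).reachable).trans hru
      have hrw2 : (G.induce (↑P : Set (ℝ × ℝ))).Reachable ⟨w2, hw2P⟩ ⟨w1, hw1P⟩ :=
        ((hadjG w2 v hw2P hvP ha3.symm).reachable).trans hrv
      rcases hpart p hp' with rfl | rfl | hpN | hpQ
      · exact hru
      · exact hrv
      · rcases eq_or_ne p w1 with rfl | hne
        · exact SimpleGraph.Reachable.refl _
        · have : G.Adj w1 p := (hGadj w1 p).mpr ⟨hSx p hpN hne, Ne.symm hne⟩
          exact (hadjG p w1 hp' hw1P this.symm).reachable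
      · rcases eq_or_ne p w2 with rfl | hne
        · exact hrw2
        · have : G.Adj w2 p := (hGadj w2 p).mpr ⟨hSy p hpQ hne, Ne.symm hne⟩
          exact ((hadjG p w2 hp' hw2P this.symm).reachable).trans hrw2
    haveI : Nonempty (↑P : Set (ℝ × ℝ)) := ⟨⟨w1, hw1P⟩⟩
    exact SimpleGraph.Connected.mk (fun x y => (hreach x).trans (hreach y).symm)
  · -- acyclicity
    have hdel : ∀ (e : Sym2 (ℝ × ℝ)) (p q : ℝ × ℝ),
        (G \ SimpleGraph.fromEdgeSet {e}).Adj p q → G.Adj p q ∧ s(p,q) ≠ e := by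
      intro e p q h
      obtain ⟨h1, h2⟩ := (SimpleGraph.sdiff_adj G (SimpleGraph.fromEdgeSet {e}) p q).mp h
      refine ⟨h1, fun hh => h2 ?_⟩
      exact (SimpleGraph.fromEdgeSet_adj _).mpr ⟨Set.mem_singleton_iff.mpr hh, ((hGadj p q).mp h1).2⟩
    have hacyG : G.IsAcyclic := by
      rw [SimpleGraph.isAcyclic_iff_forall_adj_isBridge]
      intro a b hab
      rw [SimpleGraph.isBridge_iff]
      refine fun hreach' => ?_
      rcases hclass a b hab with ⟨x, hx, hxw, he1, -⟩ | ⟨he1, -⟩ | ⟨y, hy, hyw, he1, -⟩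
      · rcases hx with hx | hxN
        · -- spine edge w1-u : cut by sign
          have hinv : ∀ p q, (G \ SimpleGraph.fromEdgeSet {s(a,b)}).Adj p q →
              (sideVal u v p < 0 ↔ sideVal u v q < 0) := by
            intro p q hpq
            obtain ⟨hpq', hne⟩ := hdel _ _ _ hpq
            rcases hclass p q hpq' with ⟨x', hx', hxw', he2, -⟩ | ⟨he2, -⟩ | ⟨y', hy', hyw', he2, -⟩
            · rcases hx' with hx' | hx'N
              · exfalso; apply hne; rw [he2, hx', he1, hx]
              · exact sym2_iff_of_true (Q := fun z => sideVal u v z < 0) he2 hw1s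
                  ((hmemN x').mp hx'N).2
            · refine sym2_iff_of_false (Q := fun z => sideVal u v z < 0) he2 ?_ ?_
              · intro h; rw [hsu] at h; exact lt_irrefl 0 h
              · intro h; rw [hsv] at h; exact lt_irrefl 0 h
            · refine sym2_iff_of_false (Q := fun z => sideVal u v z < 0) he2 ?_ ?_
              · intro h; exact absurd hw2s (by linarith)
              · intro h; exact absurd (hQfact y' hy').2 (by linarith)
          rw [hx] at he1
          rcases Sym2.eq_iff.mp he1 with ⟨rfl, rfl⟩ | ⟨rfl, rfl⟩
          · have hq := (reachable_inv hinv hreach').mp hw1s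
            rw [hsu] at hq; exact lt_irrefl 0 hq
          · have hq := (reachable_inv hinv hreach').mpr hw1s
            rw [hsu] at hq; exact lt_irrefl 0 hq
        · -- leaf edge w1-x : cut {x}
          have hxs : sideVal u v x < 0 := ((hmemN x).mp hxN).2
          have hinv : ∀ p q, (G \ SimpleGraph.fromEdgeSet {s(a,b)}).Adj p q →
              (p = x ↔ q = x) := by
            intro p q hpq
            obtain ⟨hpq', hne⟩ := hdel _ _ _ hpq
            rcases hclass p q hpq' with ⟨x', hx', hxw', he2, -⟩ | ⟨he2, -⟩ | ⟨y', hy', hyw', he2, -⟩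
            · rcases eq_or_ne x' x with rfl | hxx
              · exfalso; apply hne; rw [he2, he1]
              · exact sym2_iff_of_false (Q := fun z => z = x) he2 (Ne.symm hxw) hxx
            · refine sym2_iff_of_false (Q := fun z => z = x) he2 ?_ ?_
              · intro h; rw [← h, hsu] at hxs; exact lt_irrefl 0 hxs
              · intro h; rw [← h, hsv] at hxs; exact lt_irrefl 0 hxs
            · refine sym2_iff_of_false (Q := fun z => z = x) he2 ?_ ?_
              · intro h; rw [← h] at hxs; exact absurd hw2s (by linarith)
              · intro h; rw [← h] at hxs; exact absurd (hQfact y' hy').2 (by linarith)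
          rcases Sym2.eq_iff.mp he1 with ⟨rfl, rfl⟩ | ⟨rfl, rfl⟩
          · exact hxw ((reachable_inv hinv hreach').mpr rfl).symm
          · exact hxw ((reachable_inv hinv hreach').mp rfl).symm
      · -- spine edge u-v : cut by (sideVal < 0 or = u)
        have hinv : ∀ p q, (G \ SimpleGraph.fromEdgeSet {s(a,b)}).Adj p q →
            ((sideVal u v p < 0 ∨ p = u) ↔ (sideVal u v q < 0 ∨ q = u)) := by
          intro p q hpq
          obtain ⟨hpq', hne⟩ := hdel _ _ _ hpq
          rcases hclass p q hpq' with ⟨x', hx', hxw', he2, -⟩ | ⟨he2, -⟩ | ⟨y', hy', hyw', he2, -⟩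
          · refine sym2_iff_of_true (Q := fun z => sideVal u v z < 0 ∨ z = u) he2
              (Or.inl hw1s) ?_
            rcases hx' with hx' | hx'N
            · exact Or.inr hx'
            · exact Or.inl ((hmemN x').mp hx'N).2
          · exfalso; apply hne; rw [he2, he1]
          · refine sym2_iff_of_false (Q := fun z => sideVal u v z < 0 ∨ z = u) he2 ?_ ?_
            · rintro (h | h)
              · exact absurd hw2s (by linarith)
              · exact hw2u h
            · rintro (h | h)
              · exact absurd (hQfact y' hy').2 (by linarith)
              · rcases hy' with hy' | hy'Q
                · rw [hy'] at h; exact huv h.symm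
                · rw [h] at hy'Q
                  have hq := ((hmemQ u).mp hy'Q).2
                  rw [hsu] at hq; exact lt_irrefl 0 hq
        rcases Sym2.eq_iff.mp he1 with ⟨rfl, rfl⟩ | ⟨rfl, rfl⟩
        · rcases (reachable_inv hinv hreach').mp (Or.inr rfl) with h | h
          · rw [hsv] at h; exact lt_irrefl 0 h
          · exact huv h.symm
        · rcases (reachable_inv hinv hreach').mpr (Or.inr rfl) with h | h
          · rw [hsv] at h; exact lt_irrefl 0 h
          · exact huv h.symm
      · rcases hy with hy | hyQ
        · -- spine edge v-w2 : cut by positive sign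
          have hinv : ∀ p q, (G \ SimpleGraph.fromEdgeSet {s(a,b)}).Adj p q →
              (0 < sideVal u v p ↔ 0 < sideVal u v q) := by
            intro p q hpq
            obtain ⟨hpq', hne⟩ := hdel _ _ _ hpq
            rcases hclass p q hpq' with ⟨x', hx', hxw', he2, -⟩ | ⟨he2, -⟩ | ⟨y', hy', hyw', he2, -⟩
            · refine sym2_iff_of_false (Q := fun z => 0 < sideVal u v z) he2 ?_ ?_
              · intro h; exact absurd hw1s (by linarith)
              · intro h; exact absurd (hNfact x' hx').2 (by linarith)
            · refine sym2_iff_of_false (Q := fun z => 0 < sideVal u v z) he2 ?_ ?_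
              · intro h; rw [hsu] at h; exact lt_irrefl 0 h
              · intro h; rw [hsv] at h; exact lt_irrefl 0 h
            · rcases hy' with hy' | hy'Q
              · exfalso; apply hne; rw [he2, hy', he1, hy]
              · exact sym2_iff_of_true (Q := fun z => 0 < sideVal u v z) he2 hw2s
                  ((hmemQ y').mp hy'Q).2
          rw [hy] at he1
          rcases Sym2.eq_iff.mp he1 with ⟨rfl, rfl⟩ | ⟨rfl, rfl⟩
          · have hq := (reachable_inv hinv hreach').mp hw2s
            rw [hsv] at hq; exact lt_irrefl 0 hq
          · have hq := (reachable_inv hinv hreach').mpr hw2s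
            rw [hsv] at hq; exact lt_irrefl 0 hq
        · -- leaf edge w2-y : cut {y}
          have hys : 0 < sideVal u v y := ((hmemQ y).mp hyQ).2
          have hinv : ∀ p q, (G \ SimpleGraph.fromEdgeSet {s(a,b)}).Adj p q →
              (p = y ↔ q = y) := by
            intro p q hpq
            obtain ⟨hpq', hne⟩ := hdel _ _ _ hpq
            rcases hclass p q hpq' with ⟨x', hx', hxw', he2, -⟩ | ⟨he2, -⟩ | ⟨y', hy', hyw', he2, -⟩
            · refine sym2_iff_of_false (Q := fun z => z = y) he2 ?_ ?_
              · intro h; rw [← h] at hys; exact absurd hw1s (by linarith)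
              · intro h; rw [← h] at hys; exact absurd (hNfact x' hx').2 (by linarith)
            · refine sym2_iff_of_false (Q := fun z => z = y) he2 ?_ ?_
              · intro h; rw [← h, hsu] at hys; exact lt_irrefl 0 hys
              · intro h; rw [← h, hsv] at hys; exact lt_irrefl 0 hys
            · rcases eq_or_ne y' y with rfl | hyy
              · exfalso; apply hne; rw [he2, he1]
              · exact sym2_iff_of_false (Q := fun z => z = y) he2 (Ne.symm hyw) hyy
          rcases Sym2.eq_iff.mp he1 with ⟨rfl, rfl⟩ | ⟨rfl, rfl⟩
          · exact hyw ((reachable_inv hinv hreach').mpr rfl).symm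
          · exact hyw ((reachable_inv hinv hreach').mp rfl).symm
    intro z c hc
    exact hacyG (c.map (SimpleGraph.Embedding.induce (↑P : Set (ℝ × ℝ))).toHom)
      (hc.map Subtype.val_injective)
  · -- non-crossing
    intro a b c d hab hcd hnee
    rcases hclass a b hab with ⟨x, hx, hxw, he1, hs1⟩ | ⟨he1, hs1⟩ | ⟨y, hy, hyw, he1, hs1⟩ <;>
      rcases hclass c d hcd with ⟨x', hx', hxw', he2, hs2⟩ | ⟨he2, hs2⟩ | ⟨y', hy', hyw', he2, hs2⟩
    · rw [hs1, hs2]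
      have hxx : x ≠ x' := by rintro rfl; exact hnee (he1.trans he2.symm)
      exact disjoint_openSegment_same_end
        (hgp w1 hw1P x (hNfact x hx).1 x' (hNfact x' hx').1 (Ne.symm hxw) (Ne.symm hxw') hxx)
    · rw [hs1, hs2, Set.disjoint_left]
      intro p hp1 hp2
      have g1 := neg_on_openSegment hw1s (hNfact x hx).2 p hp1
      have g2 := zero_on_openSegment hsu hsv p hp2
      linarith
    · rw [hs1, hs2, Set.disjoint_left]
      intro p hp1 hp2
      have g1 := neg_on_openSegment hw1s (hNfact x hx).2 p hp1
      have g2 := pos_on_openSegment hw2s (hQfact y' hy').2 p hp2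
      linarith
    · rw [hs1, hs2, Set.disjoint_left]
      intro p hp1 hp2
      have g1 := zero_on_openSegment hsu hsv p hp1
      have g2 := neg_on_openSegment hw1s (hNfact x' hx').2 p hp2
      linarith
    · exact absurd (he1.trans he2.symm) hnee
    · rw [hs1, hs2, Set.disjoint_left]
      intro p hp1 hp2
      have g1 := zero_on_openSegment hsu hsv p hp1
      have g2 := pos_on_openSegment hw2s (hQfact y' hy').2 p hp2
      linarith
    · rw [hs1, hs2, Set.disjoint_left]
      intro p hp1 hp2
      have g1 := pos_on_openSegment hw2s (hQfact y hy).2 p hp1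
      have g2 := neg_on_openSegment hw1s (hNfact x' hx').2 p hp2
      linarith
    · rw [hs1, hs2, Set.disjoint_left]
      intro p hp1 hp2
      have g1 := pos_on_openSegment hw2s (hQfact y hy).2 p hp1
      have g2 := zero_on_openSegment hsu hsv p hp2
      linarith
    · rw [hs1, hs2]
      have hyy : y ≠ y' := by rintro rfl; exact hnee (he1.trans he2.symm)
      exact disjoint_openSegment_same_end
        (hgp w2 hw2P y (hQfact y hy).1 y' (hQfact y' hy').1 (Ne.symm hyw) (Ne.symm hyw') hyy)
end
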